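/- arXiv:2111.00154 — 8 statements merged into one kernel-verified Lean document; each statement's English description precedes it below -/
import Mathlib

section
/- For a complete bipartite graph K_{m,n} with parts X (|X|=m) and Y (|Y|=n), there exists a linear ordering σ of the vertex set X ∪ Y whose total imbalance equals m·n + (m mod 2)·(n mod 2). -/
open Finset
open scoped Classical

noncomputable def vertexImbalance {V : Type*} [Fintype V] (G : SimpleGraph V)
    (σ : V ≃ Fin (Fintype.card V)) (v : V) : ℕ :=
  (((univ.filter fun u => G.Adj v u ∧ σ u < σ v).card : ℤ) -
   ((univ.filter fun u => G.Adj v u ∧ σ v < σ u).card : ℤ)).natAbs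

noncomputable def totalImbalance {V : Type*} [Fintype V] (G : SimpleGraph V)
    (σ : V ≃ Fin (Fintype.card V)) : ℕ :=
  ∑ v, vertexImbalance G σ v

lemma card_filter_val_lt (N k : ℕ) (hk : k ≤ N) :
    (univ.filter fun j : Fin N => (j : ℕ) < k).card = k := by
  rw [Finset.card_filter, Fin.sum_univ_eq_sum_range (fun i => if i < k then (1:ℕ) else 0),
    ← Finset.card_filter]
  have : (range N).filter (fun i => i < k) = range k := by
    ext x; simp only [mem_filter, mem_range]; omega
  rw [this, card_range]

lemma card_filter_val_not_lt (N k : ℕ) (hk : k ≤ N) :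
    (univ.filter fun j : Fin N => ¬ (j : ℕ) < k).card = N - k := by
  have h := Finset.card_filter_add_card_filter_not
    (s := (univ : Finset (Fin N))) (p := fun j : Fin N => (j : ℕ) < k)
  rw [card_filter_val_lt N k hk, card_univ, Fintype.card_fin] at h
  omega

theorem stmt0 (m n : ℕ) :
    ∃ σ : (Fin m ⊕ Fin n) ≃ Fin (Fintype.card (Fin m ⊕ Fin n)),
      totalImbalance (completeBipartiteGraph (Fin m) (Fin n)) σ = m * n + (m % 2) * (n % 2) := by
  classical
  set a := m / 2 with ha
  set c := n - n / 2 with hc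
  have hal : a ≤ m := Nat.div_le_self m 2
  have hcl : c ≤ n := Nat.sub_le _ _
  set pos : Fin m ⊕ Fin n → ℕ :=
    Sum.elim (fun i : Fin m => if (i:ℕ) < a then (i:ℕ) else (i:ℕ) + c)
             (fun j : Fin n => if (j:ℕ) < c then a + (j:ℕ) else m + (j:ℕ)) with hpos
  have hlt : ∀ v, pos v < m + n := by
    rintro (i | j)
    · have := i.2
      simp only [hpos, Sum.elim_inl]; split <;> omega
    · have := j.2
      simp only [hpos, Sum.elim_inr]; split <;> omega
  set f : Fin m ⊕ Fin n → Fin (m + n) := fun v => ⟨pos v, hlt v⟩ with hf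
  have hinj : Function.Injective f := by
    rintro (i | j) (i' | j') h <;>
      simp only [hf, Fin.mk.injEq, hpos, Sum.elim_inl, Sum.elim_inr] at h
    · have h1 := i.2; have h2 := i'.2
      split_ifs at h <;> simp_all <;> omega
    · have h1 := i.2; have h2 := j'.2
      split_ifs at h <;> omega
    · have h1 := j.2; have h2 := i'.2
      split_ifs at h <;> omega
    · have h1 := j.2; have h2 := j'.2
      split_ifs at h <;> simp_all <;> omega
  have hbij : Function.Bijective f :=
    (Fintype.bijective_iff_injective_and_card f).2 ⟨hinj, by simp⟩
  refine ⟨(Equiv.ofBijective f hbij).trans (finCongr (by simp)), ?_⟩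
  set σ : (Fin m ⊕ Fin n) ≃ Fin (Fintype.card (Fin m ⊕ Fin n)) :=
    (Equiv.ofBijective f hbij).trans (finCongr (by simp)) with hσdef
  have hσ : ∀ u v, σ u < σ v ↔ pos u < pos v := by
    intro u v
    simp [hσdef, Fin.lt_def, hf]
  set G := completeBipartiteGraph (Fin m) (Fin n) with hG
  have hcard2 : ∀ (q : Fin m ⊕ Fin n → Prop) (inst : DecidablePred q),
      (@Finset.filter _ q inst univ).card =
        (univ.filter fun i : Fin m => q (.inl i)).card +
        (univ.filter fun j : Fin n => q (.inr j)).card := by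
    intro q inst
    rw [Finset.card_filter, Finset.card_filter, Finset.card_filter, Fintype.sum_sum_type]
  have hx : ∀ i : Fin m,
      vertexImbalance G σ (.inl i) = if (i:ℕ) < a then n else n % 2 := by
    intro i
    have hi := i.2
    unfold vertexImbalance
    rw [hcard2 _ _, hcard2 _ _]
    have hadl : ∀ i' : Fin m, ¬ G.Adj (.inl i) (.inl i') := by simp [hG]
    have hadr : ∀ j : Fin n, G.Adj (.inl i) (.inr j) := by simp [hG]
    simp only [hadl, false_and, filter_false, card_empty, hadr, true_and, zero_add]
    by_cases hia : (i:ℕ) < a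
    · have h1 : (univ.filter fun j : Fin n => σ (.inr j) < σ (.inl i)) = ∅ := by
        ext j
        simp only [mem_filter, mem_univ, true_and, hσ, hpos, Sum.elim_inl, Sum.elim_inr,
          notMem_empty, iff_false]
        split_ifs <;> omega
      have h2 : (univ.filter fun j : Fin n => σ (.inl i) < σ (.inr j)) = univ := by
        ext j
        simp only [mem_filter, mem_univ, true_and, hσ, hpos, Sum.elim_inl, Sum.elim_inr,
          iff_true]
        split_ifs <;> omega
      rw [h1, h2, if_pos hia]
      simp
    · have h1 : (univ.filter fun j : Fin n => σ (.inr j) < σ (.inl i))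
          = (univ.filter fun j : Fin n => (j:ℕ) < c) := by
        apply filter_congr
        intro j _
        simp only [hσ, hpos, Sum.elim_inl, Sum.elim_inr, eq_iff_iff]
        split_ifs <;> omega
      have h2 : (univ.filter fun j : Fin n => σ (.inl i) < σ (.inr j))
          = (univ.filter fun j : Fin n => ¬ (j:ℕ) < c) := by
        apply filter_congr
        intro j _
        simp only [hσ, hpos, Sum.elim_inl, Sum.elim_inr, eq_iff_iff]
        split_ifs <;> omega
      rw [h1, h2, card_filter_val_lt n c hcl, card_filter_val_not_lt n c hcl, if_neg hia]
      omega
  have hy : ∀ j : Fin n,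
      vertexImbalance G σ (.inr j) = if (j:ℕ) < c then m % 2 else m := by
    intro j
    have hj := j.2
    unfold vertexImbalance
    rw [hcard2 _ _, hcard2 _ _]
    have hadl : ∀ i : Fin m, G.Adj (.inr j) (.inl i) := by simp [hG]
    have hadr : ∀ j' : Fin n, ¬ G.Adj (.inr j) (.inr j') := by simp [hG]
    simp only [hadl, true_and, hadr, false_and, filter_false, card_empty, add_zero]
    by_cases hjc : (j:ℕ) < c
    · have h1 : (univ.filter fun i : Fin m => σ (.inl i) < σ (.inr j))
          = (univ.filter fun i : Fin m => (i:ℕ) < a) := by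
        apply filter_congr
        intro i _
        have hi := i.2
        simp only [hσ, hpos, Sum.elim_inl, Sum.elim_inr, eq_iff_iff]
        split_ifs <;> omega
      have h2 : (univ.filter fun i : Fin m => σ (.inr j) < σ (.inl i))
          = (univ.filter fun i : Fin m => ¬ (i:ℕ) < a) := by
        apply filter_congr
        intro i _
        have hi := i.2
        simp only [hσ, hpos, Sum.elim_inl, Sum.elim_inr, eq_iff_iff]
        split_ifs <;> omega
      rw [h1, h2, card_filter_val_lt m a hal, card_filter_val_not_lt m a hal, if_pos hjc]
      omega
    · have h1 : (univ.filter fun i : Fin m => σ (.inl i) < σ (.inr j)) = univ := by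
        ext i
        have hi := i.2
        simp only [mem_filter, mem_univ, true_and, hσ, hpos, Sum.elim_inl, Sum.elim_inr,
          iff_true]
        split_ifs <;> omega
      have h2 : (univ.filter fun i : Fin m => σ (.inr j) < σ (.inl i)) = ∅ := by
        ext i
        have hi := i.2
        simp only [mem_filter, mem_univ, true_and, hσ, hpos, Sum.elim_inl, Sum.elim_inr,
          notMem_empty, iff_false]
        split_ifs <;> omega
      rw [h1, h2, if_neg hjc]
      simp
  unfold totalImbalance
  rw [Fintype.sum_sum_type]
  rw [Finset.sum_congr rfl (fun i _ => hx i), Finset.sum_congr rfl (fun j _ => hy j)]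
  rw [Finset.sum_ite, Finset.sum_ite]
  simp only [Finset.sum_const, smul_eq_mul]
  rw [card_filter_val_lt m a hal, card_filter_val_not_lt m a hal,
    card_filter_val_lt n c hcl, card_filter_val_not_lt n c hcl]
  -- arithmetic
  obtain ⟨A, r, hr, hm⟩ : ∃ A r, r < 2 ∧ m = 2 * A + r := ⟨m / 2, m % 2, by omega, by omega⟩
  obtain ⟨C, s, hs, hn⟩ : ∃ C s, s < 2 ∧ n = 2 * C + s := ⟨n / 2, n % 2, by omega, by omega⟩
  have h1 : a = A := by omega
  have h2 : c = C + s := by omega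
  have h3 : m % 2 = r := by omega
  have h4 : n % 2 = s := by omega
  rw [h1, h2, h3, h4]
  rw [show m - A = A + r by omega, show n - (C + s) = C by omega, hm, hn]
  ring
end

section
/- Let K_{m,n} have parts X (size m, n ≥ 1) and Y (size n even). If Y is partitioned into Y₁, Y₂ with |Y₁| = |Y₂| = n/2 and σ is any ordering that places all of Y₁ first, then all of X, then all of Y₂, then every vertex of X has imbalance 0 under σ, every vertex of Y has imbalance m under σ, and the total imbalance of σ is m·n. -/
open Finset
open scoped Classical

/-- Block index: vertices of `Y₁` come first, then all of `X`, then the rest of `Y`. -/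
noncomputable def blk3 {m n : ℕ} (Y₁ : Finset (Fin n)) : Fin m ⊕ Fin n → ℕ :=
  Sum.elim (fun _ => 1) (fun y => if y ∈ Y₁ then 0 else 2)
theorem stmt3 (m n : ℕ) (hn : Even n) (hn1 : 1 ≤ n)
    (Y₁ Y₂ : Finset (Fin n)) (hYd : Disjoint Y₁ Y₂) (hYu : Y₁ ∪ Y₂ = univ)
    (hY1 : Y₁.card = n / 2) (hY2 : Y₂.card = n / 2)
    (σ : (Fin m ⊕ Fin n) ≃ Fin (Fintype.card (Fin m ⊕ Fin n)))
    (horder : ∀ u v : Fin m ⊕ Fin n, blk3 Y₁ u < blk3 Y₁ v → σ u < σ v) :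
    (∀ x : Fin m, vertexImbalance (completeBipartiteGraph (Fin m) (Fin n)) σ (Sum.inl x) = 0) ∧
    (∀ y : Fin n, vertexImbalance (completeBipartiteGraph (Fin m) (Fin n)) σ (Sum.inr y) = m) ∧
    totalImbalance (completeBipartiteGraph (Fin m) (Fin n)) σ = m * n := by
  have key : ∀ (x : Fin m) (y : Fin n), σ (Sum.inr y) < σ (Sum.inl x) ↔ y ∈ Y₁ := by
    intro x y
    constructor
    · intro h
      by_contra hy
      exact absurd h (not_lt.2 (horder _ _ (by simp [blk3, hy])).le)
    · intro hy
      exact horder _ _ (by simp [blk3, hy])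
  have key2 : ∀ (x : Fin m) (y : Fin n), σ (Sum.inl x) < σ (Sum.inr y) ↔ y ∉ Y₁ := by
    intro x y
    constructor
    · intro h hy
      exact absurd ((key x y).2 hy) (not_lt.2 h.le)
    · intro hy
      exact horder _ _ (by simp [blk3, hy])
  have hYc : Y₁ᶜ = Y₂ := by
    apply Finset.eq_of_subset_of_card_le
    · intro a ha
      have := Finset.mem_univ a
      rw [← hYu, Finset.mem_union] at this
      rcases this with h | h
      · exact absurd h (Finset.mem_compl.1 ha)
      · exact h
    · rw [hY2, Finset.card_compl, hY1, Fintype.card_fin]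
      omega
  have hG : ∀ (x : Fin m) (u : Fin m ⊕ Fin n),
      (completeBipartiteGraph (Fin m) (Fin n)).Adj (Sum.inl x) u ↔ u.isRight := by
    intro x u; simp
  have hx : ∀ x : Fin m,
      vertexImbalance (completeBipartiteGraph (Fin m) (Fin n)) σ (Sum.inl x) = 0 := by
    intro x
    have h1 : (univ.filter fun u => (completeBipartiteGraph (Fin m) (Fin n)).Adj (Sum.inl x) u
        ∧ σ u < σ (Sum.inl x)) = Y₁.image Sum.inr := by
      ext u
      rcases u with a | y
      · simp
      · simp [key x y]
    have h2 : (univ.filter fun u => (completeBipartiteGraph (Fin m) (Fin n)).Adj (Sum.inl x) u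
        ∧ σ (Sum.inl x) < σ u) = Y₂.image Sum.inr := by
      ext u
      rcases u with a | y
      · simp
      · simp [key2 x y, ← hYc]
    unfold vertexImbalance
    rw [h1, h2, Finset.card_image_of_injective _ Sum.inr_injective,
      Finset.card_image_of_injective _ Sum.inr_injective, hY1, hY2]
    simp
  have hy : ∀ y : Fin n,
      vertexImbalance (completeBipartiteGraph (Fin m) (Fin n)) σ (Sum.inr y) = m := by
    intro y
    by_cases hy1 : y ∈ Y₁
    · have h1 : (univ.filter fun u => (completeBipartiteGraph (Fin m) (Fin n)).Adj (Sum.inr y) u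
          ∧ σ u < σ (Sum.inr y)) = ∅ := by
        ext u
        rcases u with a | b
        · simpa using ((key a y).2 hy1).le
        · simp
      have h2 : (univ.filter fun u => (completeBipartiteGraph (Fin m) (Fin n)).Adj (Sum.inr y) u
          ∧ σ (Sum.inr y) < σ u) = (univ : Finset (Fin m)).image Sum.inl := by
        ext u
        rcases u with a | b
        · simpa using (key a y).2 hy1
        · simp
      unfold vertexImbalance
      rw [h1, h2, Finset.card_image_of_injective _ Sum.inl_injective]
      simp
    · have h1 : (univ.filter fun u => (completeBipartiteGraph (Fin m) (Fin n)).Adj (Sum.inr y) u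
          ∧ σ u < σ (Sum.inr y)) = (univ : Finset (Fin m)).image Sum.inl := by
        ext u
        rcases u with a | b
        · simpa using (key2 a y).2 hy1
        · simp
      have h2 : (univ.filter fun u => (completeBipartiteGraph (Fin m) (Fin n)).Adj (Sum.inr y) u
          ∧ σ (Sum.inr y) < σ u) = ∅ := by
        ext u
        rcases u with a | b
        · simpa using ((key2 a y).2 hy1).le
        · simp
      unfold vertexImbalance
      rw [h1, h2, Finset.card_image_of_injective _ Sum.inl_injective]
      simp
  refine ⟨hx, hy, ?_⟩
  unfold totalImbalance
  rw [Fintype.sum_sum_type]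
  simp [hx, hy, mul_comm]
end

section
/- Let K_{m,n} have parts X (size m odd) and Y (size n odd). Fix y_m ∈ Y, partition X into X₁, X₂ with ||X₁|−|X₂|| = 1 and Y \ {y_m} into Y₁, Y₂ with |Y₁| = |Y₂|. Then for any ordering σ of the form Y₁, X₁, y_m, X₂, Y₂ (each block in arbitrary internal order), every vertex of X ∪ {y_m} has imbalance 1, every vertex of Y \ {y_m} has imbalance m, and the total imbalance is m·n + 1. -/
open Finset
open scoped Classical

/-- Block index for the ordering `Y₁, X₁, yₘ, X₂, Y₂`. -/
noncomputable def blk4 {m n : ℕ} (X₁ : Finset (Fin m)) (Y₁ : Finset (Fin n)) (ym : Fin n) :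
    Fin m ⊕ Fin n → ℕ :=
  Sum.elim (fun x => if x ∈ X₁ then 1 else 3)
    (fun y => if y = ym then 2 else if y ∈ Y₁ then 0 else 4)

theorem stmt4 (m n : ℕ) (hm : Odd m) (hn : Odd n) (ym : Fin n)
    (X₁ X₂ : Finset (Fin m)) (hXd : Disjoint X₁ X₂) (hXu : X₁ ∪ X₂ = univ)
    (hXc : ((X₁.card : ℤ) - (X₂.card : ℤ)).natAbs = 1)
    (Y₁ Y₂ : Finset (Fin n)) (hYd : Disjoint Y₁ Y₂) (hYu : Y₁ ∪ Y₂ = univ \ {ym})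
    (hYc : Y₁.card = Y₂.card)
    (σ : (Fin m ⊕ Fin n) ≃ Fin (Fintype.card (Fin m ⊕ Fin n)))
    (horder : ∀ u v : Fin m ⊕ Fin n, blk4 X₁ Y₁ ym u < blk4 X₁ Y₁ ym v → σ u < σ v) :
    (∀ x : Fin m, vertexImbalance (completeBipartiteGraph (Fin m) (Fin n)) σ (Sum.inl x) = 1) ∧
    vertexImbalance (completeBipartiteGraph (Fin m) (Fin n)) σ (Sum.inr ym) = 1 ∧
    (∀ y : Fin n, y ≠ ym → vertexImbalance (completeBipartiteGraph (Fin m) (Fin n)) σ (Sum.inr y) = m) ∧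
    totalImbalance (completeBipartiteGraph (Fin m) (Fin n)) σ = m * n + 1 := by
  classical
  set G := completeBipartiteGraph (Fin m) (Fin n) with hG
  set b := blk4 X₁ Y₁ ym with hb
  -- basic membership facts
  have hymY1 : ym ∉ Y₁ := by
    intro h
    have : ym ∈ Y₁ ∪ Y₂ := mem_union_left _ h
    rw [hYu] at this; simp at this
  have hymY2 : ym ∉ Y₂ := by
    intro h
    have : ym ∈ Y₁ ∪ Y₂ := mem_union_right _ h
    rw [hYu] at this; simp at this
  have hYmem : ∀ y : Fin n, y ≠ ym → y ∉ Y₁ → y ∈ Y₂ := by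
    intro y hy h1
    have : y ∈ Y₁ ∪ Y₂ := by rw [hYu]; simp [hy]
    rcases mem_union.mp this with h | h
    · exact absurd h h1
    · exact h
  have hXmem : ∀ x : Fin m, x ∉ X₁ → x ∈ X₂ := by
    intro x h1
    rcases mem_union.mp (hXu ▸ mem_univ x) with h | h
    · exact absurd h h1
    · exact h
  -- translation lemmas between σ-order and block order
  have filt_lt : ∀ v : Fin m ⊕ Fin n, (∀ u, G.Adj v u → b u ≠ b v) →
      univ.filter (fun u => G.Adj v u ∧ σ u < σ v)
        = univ.filter (fun u => G.Adj v u ∧ b u < b v) := by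
    intro v hv; ext u
    simp only [mem_filter, mem_univ, true_and, and_congr_right_iff]
    intro hadj
    have hne := hv u hadj
    constructor
    · intro h
      rcases lt_trichotomy (b u) (b v) with h' | h' | h'
      · exact h'
      · exact absurd h' hne
      · exact absurd h (asymm (horder _ _ h'))
    · exact horder _ _
  have filt_gt : ∀ v : Fin m ⊕ Fin n, (∀ u, G.Adj v u → b u ≠ b v) →
      univ.filter (fun u => G.Adj v u ∧ σ v < σ u)
        = univ.filter (fun u => G.Adj v u ∧ b v < b u) := by
    intro v hv; ext u
    simp only [mem_filter, mem_univ, true_and, and_congr_right_iff]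
    intro hadj
    have hne := hv u hadj
    constructor
    · intro h
      rcases lt_trichotomy (b v) (b u) with h' | h' | h'
      · exact h'
      · exact absurd h'.symm hne
      · exact absurd h (asymm (horder _ _ h'))
    · exact horder _ _
  have hbne_inl : ∀ x : Fin m, ∀ u, G.Adj (Sum.inl x) u → b u ≠ b (Sum.inl x) := by
    intro x u hadj
    cases u with
    | inl x' => simp [hG] at hadj
    | inr y =>
      simp only [hb, blk4, Sum.elim_inl, Sum.elim_inr]
      by_cases h1 : y = ym <;> by_cases h2 : y ∈ Y₁ <;> by_cases h3 : x ∈ X₁ <;>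
        simp [h1, h2, h3]
  have hbne_inr : ∀ y : Fin n, ∀ u, G.Adj (Sum.inr y) u → b u ≠ b (Sum.inr y) := by
    intro y u hadj
    cases u with
    | inr y' => simp [hG] at hadj
    | inl x =>
      simp only [hb, blk4, Sum.elim_inl, Sum.elim_inr]
      by_cases h1 : y = ym <;> by_cases h2 : y ∈ Y₁ <;> by_cases h3 : x ∈ X₁ <;>
        simp [h1, h2, h3]
  -- imbalance of x vertices
  have hX1card : ∀ x : Fin m, x ∈ X₁ →
      vertexImbalance G σ (Sum.inl x) = 1 := by
    intro x hx
    have e1 : univ.filter (fun u => G.Adj (Sum.inl x) u ∧ b u < b (Sum.inl x))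
        = Y₁.map ⟨Sum.inr, Sum.inr_injective⟩ := by
      ext u
      cases u with
      | inl x' => simp [hG, hb, blk4]
      | inr y =>
        simp only [mem_filter, mem_univ, true_and, mem_map,
          Function.Embedding.coeFn_mk, hG, completeBipartiteGraph_adj,
          hb, blk4, Sum.elim_inl, Sum.elim_inr, hx, if_true]
        constructor
        · rintro ⟨-, h⟩
          by_cases h1 : y = ym
          · simp [h1] at h
          · by_cases h2 : y ∈ Y₁
            · exact ⟨y, h2, rfl⟩
            · simp [h1, h2] at h
        · rintro ⟨y', hy', h⟩
          cases h
          have hy : y ≠ ym := fun hh => hymY1 (hh ▸ hy')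
          simp [hy, hy']
    have e2 : univ.filter (fun u => G.Adj (Sum.inl x) u ∧ b (Sum.inl x) < b u)
        = (Y₂ ∪ {ym}).map ⟨Sum.inr, Sum.inr_injective⟩ := by
      ext u
      cases u with
      | inl x' => simp [hG, hb, blk4]
      | inr y =>
        simp only [mem_filter, mem_univ, true_and, mem_map,
          Function.Embedding.coeFn_mk, hG, completeBipartiteGraph_adj,
          hb, blk4, Sum.elim_inl, Sum.elim_inr, hx, if_true]
        constructor
        · rintro ⟨-, h⟩
          by_cases h1 : y = ym
          · exact ⟨y, by simp [h1], rfl⟩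
          · by_cases h2 : y ∈ Y₁
            · simp [h1, h2] at h
            · exact ⟨y, by simp [mem_union, hYmem y h1 h2], rfl⟩
        · rintro ⟨y', hy', h⟩
          cases h
          rcases mem_union.mp hy' with h | h
          · have h1 : y ≠ ym := by rintro rfl; exact hymY2 h
            have h2 : y ∉ Y₁ := fun hh => (disjoint_left.mp hYd hh) h
            simp [h1, h2]
          · simp at h; simp [h]
    have hcard2 : (Y₂ ∪ {ym}).card = Y₂.card + 1 := by
      rw [card_union_of_disjoint (by simp [hymY2])]; simp
    rw [vertexImbalance, filt_lt _ (hbne_inl x), filt_gt _ (hbne_inl x), e1, e2,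
      card_map, card_map, hcard2, hYc]
    simp
  have hX2card : ∀ x : Fin m, x ∈ X₂ →
      vertexImbalance G σ (Sum.inl x) = 1 := by
    intro x hx
    have hx1 : x ∉ X₁ := fun hh => (disjoint_left.mp hXd hh) hx
    have e1 : univ.filter (fun u => G.Adj (Sum.inl x) u ∧ b u < b (Sum.inl x))
        = (Y₁ ∪ {ym}).map ⟨Sum.inr, Sum.inr_injective⟩ := by
      ext u
      cases u with
      | inl x' => simp [hG, hb, blk4]
      | inr y =>
        simp only [mem_filter, mem_univ, true_and, mem_map,
          Function.Embedding.coeFn_mk, hG, completeBipartiteGraph_adj,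
          hb, blk4, Sum.elim_inl, Sum.elim_inr, hx1, if_false]
        constructor
        · rintro ⟨-, h⟩
          by_cases h1 : y = ym
          · exact ⟨y, by simp [h1], rfl⟩
          · by_cases h2 : y ∈ Y₁
            · exact ⟨y, by simp [h2], rfl⟩
            · simp [h1, h2] at h
        · rintro ⟨y', hy', h⟩
          cases h
          rcases mem_union.mp hy' with h | h
          · have h1 : y ≠ ym := by rintro rfl; exact hymY1 h
            simp [h1, h]
          · simp at h; simp [h]
    have e2 : univ.filter (fun u => G.Adj (Sum.inl x) u ∧ b (Sum.inl x) < b u)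
        = Y₂.map ⟨Sum.inr, Sum.inr_injective⟩ := by
      ext u
      cases u with
      | inl x' => simp [hG, hb, blk4]
      | inr y =>
        simp only [mem_filter, mem_univ, true_and, mem_map,
          Function.Embedding.coeFn_mk, hG, completeBipartiteGraph_adj,
          hb, blk4, Sum.elim_inl, Sum.elim_inr, hx1, if_false]
        constructor
        · rintro ⟨-, h⟩
          by_cases h1 : y = ym
          · simp [h1] at h
          · by_cases h2 : y ∈ Y₁
            · simp [h1, h2] at h
            · exact ⟨y, hYmem y h1 h2, rfl⟩
        · rintro ⟨y', hy', h⟩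
          cases h
          have h1 : y ≠ ym := by rintro rfl; exact hymY2 hy'
          have h2 : y ∉ Y₁ := fun hh => (disjoint_left.mp hYd hh) hy'
          simp [h1, h2]
    have hcard1 : (Y₁ ∪ {ym}).card = Y₁.card + 1 := by
      rw [card_union_of_disjoint (by simp [hymY1])]; simp
    rw [vertexImbalance, filt_lt _ (hbne_inl x), filt_gt _ (hbne_inl x), e1, e2,
      card_map, card_map, hcard1, hYc]
    simp
  have hXall : ∀ x : Fin m, vertexImbalance G σ (Sum.inl x) = 1 := by
    intro x
    rcases mem_union.mp (hXu ▸ mem_univ x) with h | h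
    · exact hX1card x h
    · exact hX2card x h
  -- imbalance of ym
  have hym : vertexImbalance G σ (Sum.inr ym) = 1 := by
    have e1 : univ.filter (fun u => G.Adj (Sum.inr ym) u ∧ b u < b (Sum.inr ym))
        = X₁.map ⟨Sum.inl, Sum.inl_injective⟩ := by
      ext u
      cases u with
      | inr y' => simp [hG, hb, blk4]
      | inl x =>
        simp only [mem_filter, mem_univ, true_and, mem_map,
          Function.Embedding.coeFn_mk, hG, completeBipartiteGraph_adj,
          hb, blk4, Sum.elim_inl, Sum.elim_inr, if_pos rfl]
        constructor
        · rintro ⟨-, h⟩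
          by_cases h3 : x ∈ X₁
          · exact ⟨x, h3, rfl⟩
          · simp [h3] at h
        · rintro ⟨x', hx', h⟩
          cases h
          simp [hx']
    have e2 : univ.filter (fun u => G.Adj (Sum.inr ym) u ∧ b (Sum.inr ym) < b u)
        = X₂.map ⟨Sum.inl, Sum.inl_injective⟩ := by
      ext u
      cases u with
      | inr y' => simp [hG, hb, blk4]
      | inl x =>
        simp only [mem_filter, mem_univ, true_and, mem_map,
          Function.Embedding.coeFn_mk, hG, completeBipartiteGraph_adj,
          hb, blk4, Sum.elim_inl, Sum.elim_inr, if_pos rfl]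
        constructor
        · rintro ⟨-, h⟩
          by_cases h3 : x ∈ X₁
          · simp [h3] at h
          · exact ⟨x, hXmem x h3, rfl⟩
        · rintro ⟨x', hx', h⟩
          cases h
          have h3 : x ∉ X₁ := fun hh => (disjoint_left.mp hXd hh) hx'
          simp [h3]
    rw [vertexImbalance, filt_lt _ (hbne_inr ym), filt_gt _ (hbne_inr ym), e1, e2,
      card_map, card_map, hXc]
  -- imbalance of other y vertices
  have hYall : ∀ y : Fin n, y ≠ ym → vertexImbalance G σ (Sum.inr y) = m := by
    intro y hy
    by_cases h2 : y ∈ Y₁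
    · have e1 : univ.filter (fun u => G.Adj (Sum.inr y) u ∧ b u < b (Sum.inr y))
          = ∅ := by
        ext u
        cases u with
        | inr y' => simp [hG, hb, blk4]
        | inl x =>
          simp only [mem_filter, mem_univ, true_and, hG, completeBipartiteGraph_adj,
            hb, blk4, Sum.elim_inl, Sum.elim_inr, hy, if_neg hy, h2, if_true,
            notMem_empty, iff_false]
          rintro ⟨-, h⟩
          by_cases h3 : x ∈ X₁ <;> simp [h3] at h
      have e2 : univ.filter (fun u => G.Adj (Sum.inr y) u ∧ b (Sum.inr y) < b u)
          = (univ : Finset (Fin m)).map ⟨Sum.inl, Sum.inl_injective⟩ := by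
        ext u
        cases u with
        | inr y' => simp [hG, hb, blk4]
        | inl x =>
          simp only [mem_filter, mem_univ, true_and, mem_map,
            Function.Embedding.coeFn_mk, hG, completeBipartiteGraph_adj,
            hb, blk4, Sum.elim_inl, Sum.elim_inr, if_neg hy, h2, if_true]
          by_cases h3 : x ∈ X₁ <;> simp [h3]
      rw [vertexImbalance, filt_lt _ (hbne_inr y), filt_gt _ (hbne_inr y), e1, e2,
        card_map, card_empty, card_univ, Fintype.card_fin]
      simp
    · have h2' : y ∈ Y₂ := hYmem y hy h2
      have e1 : univ.filter (fun u => G.Adj (Sum.inr y) u ∧ b u < b (Sum.inr y))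
          = (univ : Finset (Fin m)).map ⟨Sum.inl, Sum.inl_injective⟩ := by
        ext u
        cases u with
        | inr y' => simp [hG, hb, blk4]
        | inl x =>
          simp only [mem_filter, mem_univ, true_and, mem_map,
            Function.Embedding.coeFn_mk, hG, completeBipartiteGraph_adj,
            hb, blk4, Sum.elim_inl, Sum.elim_inr, if_neg hy, h2, if_false]
          by_cases h3 : x ∈ X₁ <;> simp [h3]
      have e2 : univ.filter (fun u => G.Adj (Sum.inr y) u ∧ b (Sum.inr y) < b u)
          = ∅ := by
        ext u
        cases u with
        | inr y' => simp [hG, hb, blk4]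
        | inl x =>
          simp only [mem_filter, mem_univ, true_and, hG, completeBipartiteGraph_adj,
            hb, blk4, Sum.elim_inl, Sum.elim_inr, if_neg hy, h2, if_false,
            notMem_empty, iff_false]
          rintro ⟨-, h⟩
          by_cases h3 : x ∈ X₁ <;> simp [h3] at h
      rw [vertexImbalance, filt_lt _ (hbne_inr y), filt_gt _ (hbne_inr y), e1, e2,
        card_map, card_empty, card_univ, Fintype.card_fin]
      simp
  refine ⟨hXall, hym, hYall, ?_⟩
  rw [totalImbalance, Fintype.sum_sum_type]
  have h1 : ∑ x : Fin m, vertexImbalance G σ (Sum.inl x) = m := by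
    simp [hXall]
  have h2 : ∑ y : Fin n, vertexImbalance G σ (Sum.inr y) = 1 + (n - 1) * m := by
    have : ∀ y : Fin n, vertexImbalance G σ (Sum.inr y) = if y = ym then 1 else m := by
      intro y
      by_cases h : y = ym
      · simp [h, hym]
      · simp [h, hYall y h]
    rw [← Finset.add_sum_erase univ _ (mem_univ ym), hym]
    have hrest : ∑ y ∈ univ.erase ym, vertexImbalance G σ (Sum.inr y) =
        (n - 1) * m := by
      rw [Finset.sum_congr rfl (fun y hy => hYall y (Finset.ne_of_mem_erase hy)),
        Finset.sum_const, card_erase_of_mem (mem_univ ym), card_univ, Fintype.card_fin,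
        smul_eq_mul]
    rw [hrest]
  rw [h1, h2]
  obtain ⟨k, hk⟩ := hn
  subst hk
  have : 2 * k + 1 - 1 = 2 * k := by omega
  rw [this]
  ring
end

section
/- (Shift invariance, left version.) Let σ be an imbalance-optimal ordering of K_{m,n} with parts X, Y = {y₁,...,y_n} listed in σ-order, and let L_i denote the set of X-vertices between y_i and y_{i+1} (with L_0 before y₁ and L_n after y_n). Let σ' = shift_L(σ) be the ordering that moves y_{⌊n/2⌋} to the leftmost position, keeping all other relative orders. Then I(σ') = I(σ); in particular σ' is also imbalance-optimal. -/
open Finset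
open scoped Classical

lemma card_filter_sum_split {α β : Type*} [Fintype α] [Fintype β] (P : α ⊕ β → Prop)
    [DecidablePred P] [DecidablePred fun a => P (Sum.inl a)]
    [DecidablePred fun b => P (Sum.inr b)] :
    (univ.filter P).card = (univ.filter fun a => P (Sum.inl a)).card +
      (univ.filter fun b => P (Sum.inr b)).card := by
  rw [← card_toLeft_add_card_toRight]
  congr 1
  · congr 1; ext a; simp
  · congr 1; ext b; simp

noncomputable def bcnt (m n : ℕ) (τ : (Fin m ⊕ Fin n) ≃ Fin (Fintype.card (Fin m ⊕ Fin n)))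
    (x : Fin m) : ℕ :=
  (univ.filter fun y : Fin n => τ (Sum.inr y) < τ (Sum.inl x)).card

noncomputable def ccnt (m n : ℕ) (τ : (Fin m ⊕ Fin n) ≃ Fin (Fintype.card (Fin m ⊕ Fin n)))
    (y : Fin n) : ℕ :=
  (univ.filter fun x : Fin m => τ (Sum.inl x) < τ (Sum.inr y)).card

lemma imb_inl (m n : ℕ) (τ : (Fin m ⊕ Fin n) ≃ Fin (Fintype.card (Fin m ⊕ Fin n))) (x : Fin m) :
    vertexImbalance (completeBipartiteGraph (Fin m) (Fin n)) τ (Sum.inl x) =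
      (2 * (bcnt m n τ x : ℤ) - n).natAbs := by
  rw [vertexImbalance]
  rw [card_filter_sum_split (fun u => (completeBipartiteGraph (Fin m) (Fin n)).Adj (Sum.inl x) u ∧ τ u < τ (Sum.inl x))]
  rw [card_filter_sum_split (fun u => (completeBipartiteGraph (Fin m) (Fin n)).Adj (Sum.inl x) u ∧ τ (Sum.inl x) < τ u)]
  have e1 : (univ.filter fun a : Fin m =>
      (completeBipartiteGraph (Fin m) (Fin n)).Adj (Sum.inl x) (Sum.inl a) ∧
        τ (Sum.inl a) < τ (Sum.inl x)) = ∅ := by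
    apply Finset.filter_eq_empty_iff.mpr; intro a _; simp
  have e1' : (univ.filter fun a : Fin m =>
      (completeBipartiteGraph (Fin m) (Fin n)).Adj (Sum.inl x) (Sum.inl a) ∧
        τ (Sum.inl x) < τ (Sum.inl a)) = ∅ := by
    apply Finset.filter_eq_empty_iff.mpr; intro a _; simp
  have e2 : (univ.filter fun b : Fin n =>
      (completeBipartiteGraph (Fin m) (Fin n)).Adj (Sum.inl x) (Sum.inr b) ∧
        τ (Sum.inr b) < τ (Sum.inl x)) = univ.filter fun b => τ (Sum.inr b) < τ (Sum.inl x) := by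
    apply Finset.filter_congr; intro b _; simp
  have e2' : (univ.filter fun b : Fin n =>
      (completeBipartiteGraph (Fin m) (Fin n)).Adj (Sum.inl x) (Sum.inr b) ∧
        τ (Sum.inl x) < τ (Sum.inr b)) = univ.filter fun b => τ (Sum.inl x) < τ (Sum.inr b) := by
    apply Finset.filter_congr; intro b _; simp
  rw [e1, e1', e2, e2', Finset.card_empty]
  have hsum : (univ.filter fun b : Fin n => τ (Sum.inr b) < τ (Sum.inl x)).card +
      (univ.filter fun b : Fin n => τ (Sum.inl x) < τ (Sum.inr b)).card = n := by
    have h : (univ.filter fun b : Fin n => τ (Sum.inl x) < τ (Sum.inr b)) =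
        univ.filter fun b => ¬ (τ (Sum.inr b) < τ (Sum.inl x)) := by
      ext b
      simp only [mem_filter, mem_univ, true_and, not_lt]
      constructor
      · exact fun h => h.le
      · exact fun h => lt_of_le_of_ne h (fun he => by simpa using τ.injective he)
    rw [h, Finset.card_filter_add_card_filter_not]
    simp
  rw [bcnt]
  congr 1
  push_cast
  omega

lemma imb_inr (m n : ℕ) (τ : (Fin m ⊕ Fin n) ≃ Fin (Fintype.card (Fin m ⊕ Fin n))) (y : Fin n) :
    vertexImbalance (completeBipartiteGraph (Fin m) (Fin n)) τ (Sum.inr y) =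
      (2 * (ccnt m n τ y : ℤ) - m).natAbs := by
  rw [vertexImbalance]
  rw [card_filter_sum_split (fun u => (completeBipartiteGraph (Fin m) (Fin n)).Adj (Sum.inr y) u ∧ τ u < τ (Sum.inr y))]
  rw [card_filter_sum_split (fun u => (completeBipartiteGraph (Fin m) (Fin n)).Adj (Sum.inr y) u ∧ τ (Sum.inr y) < τ u)]
  have e1 : (univ.filter fun b : Fin n =>
      (completeBipartiteGraph (Fin m) (Fin n)).Adj (Sum.inr y) (Sum.inr b) ∧
        τ (Sum.inr b) < τ (Sum.inr y)) = ∅ := by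
    apply Finset.filter_eq_empty_iff.mpr; intro b _; simp
  have e1' : (univ.filter fun b : Fin n =>
      (completeBipartiteGraph (Fin m) (Fin n)).Adj (Sum.inr y) (Sum.inr b) ∧
        τ (Sum.inr y) < τ (Sum.inr b)) = ∅ := by
    apply Finset.filter_eq_empty_iff.mpr; intro b _; simp
  have e2 : (univ.filter fun a : Fin m =>
      (completeBipartiteGraph (Fin m) (Fin n)).Adj (Sum.inr y) (Sum.inl a) ∧
        τ (Sum.inl a) < τ (Sum.inr y)) = univ.filter fun a => τ (Sum.inl a) < τ (Sum.inr y) := by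
    apply Finset.filter_congr; intro a _; simp
  have e2' : (univ.filter fun a : Fin m =>
      (completeBipartiteGraph (Fin m) (Fin n)).Adj (Sum.inr y) (Sum.inl a) ∧
        τ (Sum.inr y) < τ (Sum.inl a)) = univ.filter fun a => τ (Sum.inr y) < τ (Sum.inl a) := by
    apply Finset.filter_congr; intro a _; simp
  rw [e1, e1', e2, e2', Finset.card_empty]
  have hsum : (univ.filter fun a : Fin m => τ (Sum.inl a) < τ (Sum.inr y)).card +
      (univ.filter fun a : Fin m => τ (Sum.inr y) < τ (Sum.inl a)).card = m := by
    have h : (univ.filter fun a : Fin m => τ (Sum.inr y) < τ (Sum.inl a)) =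
        univ.filter fun a => ¬ (τ (Sum.inl a) < τ (Sum.inr y)) := by
      ext a
      simp only [mem_filter, mem_univ, true_and, not_lt]
      constructor
      · exact fun h => h.le
      · exact fun h => lt_of_le_of_ne h (fun he => by simpa using τ.injective he)
    rw [h, Finset.card_filter_add_card_filter_not]
    simp
  rw [ccnt]
  congr 1
  push_cast
  omega

lemma total_int (m n : ℕ) (τ : (Fin m ⊕ Fin n) ≃ Fin (Fintype.card (Fin m ⊕ Fin n))) :
    (totalImbalance (completeBipartiteGraph (Fin m) (Fin n)) τ : ℤ) =
      (∑ x : Fin m, |2 * (bcnt m n τ x : ℤ) - n|) +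
        ∑ y : Fin n, |2 * (ccnt m n τ y : ℤ) - m| := by
  rw [totalImbalance, Fintype.sum_sum_type]
  push_cast
  congr 1
  · refine Finset.sum_congr rfl fun x _ => ?_
    rw [imb_inl]
    exact Int.natCast_natAbs _
  · refine Finset.sum_congr rfl fun y _ => ?_
    rw [imb_inr]
    exact Int.natCast_natAbs _

theorem stmt8 (m n : ℕ)
    (σ : (Fin m ⊕ Fin n) ≃ Fin (Fintype.card (Fin m ⊕ Fin n)))
    (hopt : ∀ τ : (Fin m ⊕ Fin n) ≃ Fin (Fintype.card (Fin m ⊕ Fin n)),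
      totalImbalance (completeBipartiteGraph (Fin m) (Fin n)) σ ≤ totalImbalance (completeBipartiteGraph (Fin m) (Fin n)) τ)
    (ylist : Fin n → Fin n) (hbij : Function.Bijective ylist)
    (hmono : StrictMono fun i : Fin n => σ (Sum.inr (ylist i)))
    (j : Fin n) (hj : (j : ℕ) + 1 = n / 2)
    (σ' : (Fin m ⊕ Fin n) ≃ Fin (Fintype.card (Fin m ⊕ Fin n)))
    (hfirst : (σ' (Sum.inr (ylist j)) : ℕ) = 0)
    (hrel : ∀ u w : Fin m ⊕ Fin n, u ≠ Sum.inr (ylist j) → w ≠ Sum.inr (ylist j) →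
      (σ u < σ w ↔ σ' u < σ' w)) :
    totalImbalance (completeBipartiteGraph (Fin m) (Fin n)) σ' = totalImbalance (completeBipartiteGraph (Fin m) (Fin n)) σ ∧
    ∀ τ : (Fin m ⊕ Fin n) ≃ Fin (Fintype.card (Fin m ⊕ Fin n)),
      totalImbalance (completeBipartiteGraph (Fin m) (Fin n)) σ' ≤ totalImbalance (completeBipartiteGraph (Fin m) (Fin n)) τ := by
  classical
  -- basic order facts about σ'
  have hne : ∀ u : Fin m ⊕ Fin n, u ≠ Sum.inr (ylist j) →
      σ' (Sum.inr (ylist j)) < σ' u := by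
    intro u hu
    refine lt_of_le_of_ne ?_ ?_
    · rw [Fin.le_def, hfirst]; exact Nat.zero_le _
    · intro h; exact hu (σ'.injective h.symm)
  have hnotlt : ∀ u : Fin m ⊕ Fin n, ¬ σ' u < σ' (Sum.inr (ylist j)) := by
    intro u h
    rw [Fin.lt_def, hfirst] at h
    exact Nat.not_lt_zero _ h
  -- the c-counts
  have h2 : ccnt m n σ' (ylist j) = 0 := by
    rw [ccnt, Finset.card_eq_zero]
    exact Finset.filter_eq_empty_iff.mpr fun x _ => hnotlt _
  have h1 : ∀ y : Fin n, y ≠ ylist j → ccnt m n σ' y = ccnt m n σ y := by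
    intro y hy
    rw [ccnt, ccnt]
    congr 1
    ext x
    simp only [mem_filter, mem_univ, true_and]
    exact (hrel (Sum.inl x) (Sum.inr y) (by simp) (by simp [hy])).symm
  -- the b-counts
  have h3 : ∀ x : Fin m, σ (Sum.inl x) < σ (Sum.inr (ylist j)) →
      bcnt m n σ' x = bcnt m n σ x + 1 := by
    intro x hx
    have key : (univ.filter fun y : Fin n => σ' (Sum.inr y) < σ' (Sum.inl x)) =
        insert (ylist j) (univ.filter fun y : Fin n => σ (Sum.inr y) < σ (Sum.inl x)) := by
      ext y
      simp only [mem_insert, mem_filter, mem_univ, true_and]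
      by_cases hy : y = ylist j
      · subst hy
        simp only [true_or, iff_true]
        exact hne (Sum.inl x) (by simp)
      · simp only [hy, false_or]
        exact (hrel (Sum.inr y) (Sum.inl x) (by simp [hy]) (by simp)).symm
    rw [bcnt, key, Finset.card_insert_of_notMem, bcnt]
    simp only [mem_filter, mem_univ, true_and]
    exact fun h => absurd hx (lt_asymm h)
  have h4 : ∀ x : Fin m, ¬ σ (Sum.inl x) < σ (Sum.inr (ylist j)) →
      bcnt m n σ' x = bcnt m n σ x := by
    intro x hx
    have hxr : σ (Sum.inr (ylist j)) < σ (Sum.inl x) := by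
      refine lt_of_le_of_ne (not_lt.mp hx) ?_
      intro he; exact absurd (σ.injective he) (by simp)
    rw [bcnt, bcnt]
    congr 1
    ext y
    simp only [mem_filter, mem_univ, true_and]
    by_cases hy : y = ylist j
    · subst hy
      constructor
      · intro _; exact hxr
      · intro _; exact hne (Sum.inl x) (by simp)
    · exact (hrel (Sum.inr y) (Sum.inl x) (by simp [hy]) (by simp)).symm
  -- bound on b-counts for vertices left of y_j
  have h5 : ∀ x : Fin m, σ (Sum.inl x) < σ (Sum.inr (ylist j)) → bcnt m n σ x ≤ j := by
    intro x hx
    have hsub : (univ.filter fun y : Fin n => σ (Sum.inr y) < σ (Sum.inl x)) ⊆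
        univ.filter fun y : Fin n => σ (Sum.inr y) < σ (Sum.inr (ylist j)) := by
      intro y hy
      simp only [mem_filter, mem_univ, true_and] at *
      exact hy.trans hx
    have hT : (univ.filter fun y : Fin n => σ (Sum.inr y) < σ (Sum.inr (ylist j))) =
        Finset.image ylist (univ.filter fun i : Fin n => i < j) := by
      ext y
      simp only [mem_filter, mem_univ, true_and, mem_image]
      constructor
      · intro hy
        obtain ⟨i, rfl⟩ := hbij.surjective y
        exact ⟨i, hmono.lt_iff_lt.mp hy, rfl⟩
      · rintro ⟨i, hi, rfl⟩
        exact hmono.lt_iff_lt.mpr hi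
    calc bcnt m n σ x ≤ (univ.filter fun y : Fin n => σ (Sum.inr y) < σ (Sum.inr (ylist j))).card :=
          Finset.card_le_card hsub
      _ = (univ.filter fun i : Fin n => i < j).card := by
          rw [hT, Finset.card_image_of_injective _ hbij.injective]
      _ = j := by
          have : (univ.filter fun i : Fin n => i < j) = Finset.Iio j := by ext i; simp
          rw [this, Fin.card_Iio]
  have h2n : 2 * ((j : ℕ) + 1) ≤ n := by omega
  -- the x-sum identity
  set a : ℕ := ccnt m n σ (ylist j) with ha
  have hxsum : (∑ x : Fin m, |2 * (bcnt m n σ' x : ℤ) - n|) + 2 * a =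
      ∑ x : Fin m, |2 * (bcnt m n σ x : ℤ) - n| := by
    have haeq : (2 * a : ℤ) =
        ∑ x : Fin m, if σ (Sum.inl x) < σ (Sum.inr (ylist j)) then (2 : ℤ) else 0 := by
      rw [Finset.sum_ite, Finset.sum_const, Finset.sum_const, smul_zero, add_zero, ha, ccnt]
      ring
    rw [haeq, ← Finset.sum_add_distrib]
    refine Finset.sum_congr rfl fun x _ => ?_
    by_cases hx : σ (Sum.inl x) < σ (Sum.inr (ylist j))
    · rw [if_pos hx, h3 x hx]
      have hb := h5 x hx
      push_cast
      rw [abs_of_nonpos (by omega), abs_of_nonpos (by omega)]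
      ring
    · rw [if_neg hx, h4 x hx, add_zero]
  -- the y-sum identities
  have hysum' : (∑ y : Fin n, |2 * (ccnt m n σ' y : ℤ) - m|) =
      (m : ℤ) + ∑ y ∈ univ.erase (ylist j), |2 * (ccnt m n σ y : ℤ) - m| := by
    rw [← Finset.add_sum_erase univ _ (mem_univ (ylist j))]
    congr 1
    · rw [h2]; simp
    · refine Finset.sum_congr rfl fun y hy => ?_
      rw [h1 y (Finset.mem_erase.mp hy).1]
  have hysum : (∑ y : Fin n, |2 * (ccnt m n σ y : ℤ) - m|) =
      |2 * (a : ℤ) - m| + ∑ y ∈ univ.erase (ylist j), |2 * (ccnt m n σ y : ℤ) - m| := by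
    rw [← Finset.add_sum_erase univ _ (mem_univ (ylist j)), ha]
  -- conclude the inequality
  have hle_int : (totalImbalance (completeBipartiteGraph (Fin m) (Fin n)) σ' : ℤ) ≤
      (totalImbalance (completeBipartiteGraph (Fin m) (Fin n)) σ : ℤ) := by
    rw [total_int, total_int, hysum', hysum]
    have habs : (m : ℤ) - 2 * a ≤ |2 * (a : ℤ) - m| := by
      rw [abs_sub_comm]
      exact le_abs_self _
    have := hxsum
    linarith
  have hle : totalImbalance (completeBipartiteGraph (Fin m) (Fin n)) σ' ≤
      totalImbalance (completeBipartiteGraph (Fin m) (Fin n)) σ := by exact_mod_cast hle_int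
  have heq := le_antisymm hle (hopt σ')
  exact ⟨heq, fun τ => heq ▸ hopt τ⟩
end

section
/- (Shift invariance, right version.) Let σ be an imbalance-optimal ordering of K_{m,n} with Y-vertices y₁,...,y_n in σ-order. The ordering σ' obtained from σ by moving y_{⌈n/2⌉+1} to the rightmost position (keeping all other relative orders) satisfies I(σ') = I(σ). -/
open Finset
open scoped Classical

lemma card_filter_sum' {m n : ℕ} (p : Fin m ⊕ Fin n → Prop) [DecidablePred p] :
    (univ.filter p).card
      = (univ.filter fun x : Fin m => p (Sum.inl x)).card
        + (univ.filter fun b : Fin n => p (Sum.inr b)).card := by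
  classical
  rw [Finset.card_filter, Finset.card_filter, Finset.card_filter, Fintype.sum_sum_type]

lemma split_count' {V : Type*} [Fintype V] (G : SimpleGraph V)
    (τ : V ≃ Fin (Fintype.card V)) (v : V) :
    (univ.filter fun u => G.Adj v u ∧ τ u < τ v).card
      + (univ.filter fun u => G.Adj v u ∧ τ v < τ u).card
      = (univ.filter fun u => G.Adj v u).card := by
  classical
  rw [← card_union_of_disjoint]
  · congr 1
    ext u
    simp only [mem_union, mem_filter, mem_univ, true_and]
    constructor
    · rintro (⟨h, _⟩ | ⟨h, _⟩) <;> exact h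
    · intro h
      have hne : τ u ≠ τ v := fun he => (G.ne_of_adj (G.adj_symm h)) (τ.injective he)
      rcases lt_or_gt_of_ne hne with hlt | hgt
      exacts [Or.inl ⟨h, hlt⟩, Or.inr ⟨h, hgt⟩]
  · rw [Finset.disjoint_left]
    rintro u hu1 hu2
    rw [mem_filter] at hu1 hu2
    exact absurd hu2.2.2 (not_lt_of_gt hu1.2.2)

theorem stmt9 (m n : ℕ)
    (σ : (Fin m ⊕ Fin n) ≃ Fin (Fintype.card (Fin m ⊕ Fin n)))
    (hopt : ∀ τ : (Fin m ⊕ Fin n) ≃ Fin (Fintype.card (Fin m ⊕ Fin n)),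
      totalImbalance (completeBipartiteGraph (Fin m) (Fin n)) σ ≤ totalImbalance (completeBipartiteGraph (Fin m) (Fin n)) τ)
    (ylist : Fin n → Fin n) (hbij : Function.Bijective ylist)
    (hmono : StrictMono fun i : Fin n => σ (Sum.inr (ylist i)))
    (j : Fin n) (hj : (j : ℕ) = (n + 1) / 2)
    (σ' : (Fin m ⊕ Fin n) ≃ Fin (Fintype.card (Fin m ⊕ Fin n)))
    (hlast : (σ' (Sum.inr (ylist j)) : ℕ) = Fintype.card (Fin m ⊕ Fin n) - 1)
    (hrel : ∀ u w : Fin m ⊕ Fin n, u ≠ Sum.inr (ylist j) → w ≠ Sum.inr (ylist j) →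
      (σ u < σ w ↔ σ' u < σ' w)) :
    totalImbalance (completeBipartiteGraph (Fin m) (Fin n)) σ' = totalImbalance (completeBipartiteGraph (Fin m) (Fin n)) σ := by
  classical
  set G := completeBipartiteGraph (Fin m) (Fin n) with hG
  set y : Fin m ⊕ Fin n := Sum.inr (ylist j) with hy
  have hcard : Fintype.card (Fin m ⊕ Fin n) = m + n := by simp
  -- y is at the top of σ'
  have htop : ∀ u : Fin m ⊕ Fin n, u ≠ y → σ' u < σ' y := by
    intro u hu
    have h1 : (σ' u : ℕ) < Fintype.card (Fin m ⊕ Fin n) := (σ' u).isLt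
    have h2 : (σ' u : ℕ) ≠ (σ' y : ℕ) := fun h => hu (σ'.injective (Fin.ext h))
    rw [Fin.lt_def]
    omega
  -- Right vertices other than y : imbalance unchanged
  have hR : ∀ b : Fin n, b ≠ ylist j →
      vertexImbalance G σ' (Sum.inr b) = vertexImbalance G σ (Sum.inr b) := by
    intro b hb
    have hbne : (Sum.inr b : Fin m ⊕ Fin n) ≠ y := by simp [hy, hb]
    have e1 : (univ.filter fun u => G.Adj (Sum.inr b) u ∧ σ' u < σ' (Sum.inr b))
        = (univ.filter fun u => G.Adj (Sum.inr b) u ∧ σ u < σ (Sum.inr b)) := by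
      apply filter_congr
      intro u _
      rcases eq_or_ne u y with rfl | hu
      · simp [hy, hG]
      · exact and_congr_right fun _ => (hrel u _ hu hbne).symm
    have e2 : (univ.filter fun u => G.Adj (Sum.inr b) u ∧ σ' (Sum.inr b) < σ' u)
        = (univ.filter fun u => G.Adj (Sum.inr b) u ∧ σ (Sum.inr b) < σ u) := by
      apply filter_congr
      intro u _
      rcases eq_or_ne u y with rfl | hu
      · simp [hy, hG]
      · exact and_congr_right fun _ => (hrel _ u hbne hu).symm
    rw [vertexImbalance, vertexImbalance, e1, e2]
  -- degree facts
  have hdegL : ∀ x : Fin m, (univ.filter fun u => G.Adj (Sum.inl x) u).card = n := by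
    intro x
    rw [card_filter_sum']
    simp [hG]
  have hdegY : (univ.filter fun u => G.Adj y u).card = m := by
    rw [card_filter_sum']
    simp [hy, hG]
  -- key per-left-vertex relation
  have hkey : ∀ x : Fin m,
      vertexImbalance G σ' (Sum.inl x) + (if σ y < σ (Sum.inl x) then 2 else 0)
        = vertexImbalance G σ (Sum.inl x) := by
    intro x
    have hvne : (Sum.inl x : Fin m ⊕ Fin n) ≠ y := by simp [hy]
    have hvy : σ (Sum.inl x) ≠ σ y := fun h => hvne (σ.injective h)
    have hsum := split_count' G σ (Sum.inl x)
    rw [hdegL x] at hsum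
    rcases lt_or_gt_of_ne hvy with hlt | hgt
    · -- σ v < σ y : nothing changes for v
      have e1 : (univ.filter fun u => G.Adj (Sum.inl x) u ∧ σ' u < σ' (Sum.inl x))
          = (univ.filter fun u => G.Adj (Sum.inl x) u ∧ σ u < σ (Sum.inl x)) := by
        apply filter_congr
        intro u _
        rcases eq_or_ne u y with rfl | hu
        · exact and_congr_right fun _ =>
            iff_of_false (not_lt_of_gt (htop _ hvne)) (not_lt_of_gt hlt)
        · exact and_congr_right fun _ => (hrel u _ hu hvne).symm
      have e2 : (univ.filter fun u => G.Adj (Sum.inl x) u ∧ σ' (Sum.inl x) < σ' u)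
          = (univ.filter fun u => G.Adj (Sum.inl x) u ∧ σ (Sum.inl x) < σ u) := by
        apply filter_congr
        intro u _
        rcases eq_or_ne u y with rfl | hu
        · exact and_congr_right fun _ => iff_of_true (htop _ hvne) hlt
        · exact and_congr_right fun _ => (hrel _ u hvne hu).symm
      rw [if_neg (not_lt_of_gt hlt), vertexImbalance, vertexImbalance, e1, e2, add_zero]
    · -- σ y < σ v : v loses one below-neighbor, gains one above-neighbor
      have hadjvy : G.Adj (Sum.inl x) y := by simp [hy, hG]
      have hyB : y ∈ univ.filter fun u => G.Adj (Sum.inl x) u ∧ σ u < σ (Sum.inl x) :=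
        mem_filter.mpr ⟨mem_univ _, hadjvy, hgt⟩
      have hynA : y ∉ univ.filter fun u => G.Adj (Sum.inl x) u ∧ σ (Sum.inl x) < σ u := by
        rw [mem_filter]
        rintro ⟨-, -, h⟩
        exact absurd h (not_lt_of_gt hgt)
      have e1 : (univ.filter fun u => G.Adj (Sum.inl x) u ∧ σ' u < σ' (Sum.inl x))
          = (univ.filter fun u => G.Adj (Sum.inl x) u ∧ σ u < σ (Sum.inl x)).erase y := by
        ext u
        rw [mem_erase, mem_filter, mem_filter]
        rcases eq_or_ne u y with rfl | hu
        · simp only [mem_univ, true_and, ne_eq, not_true_eq_false, false_and, iff_false]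
          rintro ⟨-, h⟩
          exact absurd h (not_lt_of_gt (htop _ hvne))
        · constructor
          · rintro ⟨hmem, hadj, hlt'⟩
            exact ⟨hu, hmem, hadj, (hrel u _ hu hvne).mpr hlt'⟩
          · rintro ⟨-, hmem, hadj, hlt'⟩
            exact ⟨hmem, hadj, (hrel u _ hu hvne).mp hlt'⟩
      have e2 : (univ.filter fun u => G.Adj (Sum.inl x) u ∧ σ' (Sum.inl x) < σ' u)
          = insert y (univ.filter fun u => G.Adj (Sum.inl x) u ∧ σ (Sum.inl x) < σ u) := by
        ext u
        rw [mem_insert, mem_filter, mem_filter]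
        rcases eq_or_ne u y with rfl | hu
        · simp only [mem_univ, true_and, true_or, iff_true]
          exact ⟨hadjvy, htop _ hvne⟩
        · constructor
          · rintro ⟨hmem, hadj, hlt'⟩
            exact Or.inr ⟨hmem, hadj, (hrel _ u hvne hu).mpr hlt'⟩
          · rintro (h | ⟨hmem, hadj, hlt'⟩)
            · exact absurd h hu
            · exact ⟨hmem, hadj, (hrel _ u hvne hu).mp hlt'⟩
      -- lower bound on the below-count
      have hBsub : ((Iic j).image fun i => (Sum.inr (ylist i) : Fin m ⊕ Fin n))
          ⊆ univ.filter fun u => G.Adj (Sum.inl x) u ∧ σ u < σ (Sum.inl x) := by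
        intro u hu
        simp only [mem_image, mem_Iic] at hu
        obtain ⟨i, hij, rfl⟩ := hu
        refine mem_filter.mpr ⟨mem_univ _, by simp [hG], ?_⟩
        exact lt_of_le_of_lt (hmono.monotone hij) hgt
      have hinj2 : Function.Injective fun i : Fin n => (Sum.inr (ylist i) : Fin m ⊕ Fin n) :=
        fun a b h => hbij.1 (Sum.inr.inj h)
      have hBge : (j : ℕ) + 1 ≤
          (univ.filter fun u => G.Adj (Sum.inl x) u ∧ σ u < σ (Sum.inl x)).card := by
        have := card_le_card hBsub
        rwa [Finset.card_image_of_injective _ hinj2, Fin.card_Iic] at this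
      rw [if_pos hgt, vertexImbalance, vertexImbalance, e1, e2,
        card_erase_of_mem hyB, card_insert_of_notMem hynA]
      omega
  -- counts at y
  have hay : (univ.filter fun u => G.Adj y u ∧ σ u < σ y).card
      = (univ.filter fun x : Fin m => σ (Sum.inl x) < σ y).card := by
    rw [card_filter_sum' (fun u => G.Adj y u ∧ σ u < σ y)]
    simp [hy, hG]
  have hcy : (univ.filter fun u => G.Adj y u ∧ σ y < σ u).card
      = (univ.filter fun x : Fin m => σ y < σ (Sum.inl x)).card := by
    rw [card_filter_sum' (fun u => G.Adj y u ∧ σ y < σ u)]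
    simp [hy, hG]
  have hac : (univ.filter fun x : Fin m => σ (Sum.inl x) < σ y).card
      + (univ.filter fun x : Fin m => σ y < σ (Sum.inl x)).card = m := by
    have := split_count' G σ y
    rw [hay, hcy, hdegY] at this
    exact this
  have hVIy : vertexImbalance G σ y
      = (((univ.filter fun x : Fin m => σ (Sum.inl x) < σ y).card : ℤ)
          - ((univ.filter fun x : Fin m => σ y < σ (Sum.inl x)).card : ℤ)).natAbs := by
    rw [vertexImbalance, hay, hcy]
  have hVIy' : vertexImbalance G σ' y = m := by
    have e1 : (univ.filter fun u => G.Adj y u ∧ σ' u < σ' y)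
        = univ.filter fun u => G.Adj y u := by
      apply filter_congr
      intro u _
      constructor
      · exact And.left
      · intro h
        exact ⟨h, htop u (G.ne_of_adj h).symm⟩
    have e2 : (univ.filter fun u => G.Adj y u ∧ σ' y < σ' u) = ∅ := by
      rw [Finset.eq_empty_iff_forall_notMem]
      intro u hu
      rw [mem_filter] at hu
      obtain ⟨-, hadj, hlt⟩ := hu
      exact absurd hlt (not_lt_of_gt (htop u (G.ne_of_adj hadj).symm))
    rw [vertexImbalance, e1, e2, hdegY]
    simp
  -- assemble sums
  have hT' : totalImbalance G σ' = (∑ x : Fin m, vertexImbalance G σ' (Sum.inl x))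
      + (∑ b : Fin n, vertexImbalance G σ' (Sum.inr b)) := by
    rw [totalImbalance, Fintype.sum_sum_type]
  have hT : totalImbalance G σ = (∑ x : Fin m, vertexImbalance G σ (Sum.inl x))
      + (∑ b : Fin n, vertexImbalance G σ (Sum.inr b)) := by
    rw [totalImbalance, Fintype.sum_sum_type]
  have hErase : ∑ b ∈ univ.erase (ylist j), vertexImbalance G σ' (Sum.inr b)
      = ∑ b ∈ univ.erase (ylist j), vertexImbalance G σ (Sum.inr b) :=
    Finset.sum_congr rfl fun b hb => hR b (Finset.ne_of_mem_erase hb)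
  have hSr' : ∑ b : Fin n, vertexImbalance G σ' (Sum.inr b)
      = (∑ b ∈ univ.erase (ylist j), vertexImbalance G σ' (Sum.inr b)) + m := by
    rw [← Finset.sum_erase_add univ _ (mem_univ (ylist j))]
    congr 1
  have hSr : ∑ b : Fin n, vertexImbalance G σ (Sum.inr b)
      = (∑ b ∈ univ.erase (ylist j), vertexImbalance G σ (Sum.inr b))
        + (((univ.filter fun x : Fin m => σ (Sum.inl x) < σ y).card : ℤ)
            - ((univ.filter fun x : Fin m => σ y < σ (Sum.inl x)).card : ℤ)).natAbs := by
    rw [← Finset.sum_erase_add univ _ (mem_univ (ylist j))]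
    congr 1
  have hSl : ∑ x : Fin m, vertexImbalance G σ (Sum.inl x)
      = (∑ x : Fin m, vertexImbalance G σ' (Sum.inl x))
        + 2 * (univ.filter fun x : Fin m => σ y < σ (Sum.inl x)).card := by
    have h1 : ∑ x : Fin m, vertexImbalance G σ (Sum.inl x)
        = ∑ x : Fin m, (vertexImbalance G σ' (Sum.inl x)
            + (if σ y < σ (Sum.inl x) then 2 else 0)) :=
      Finset.sum_congr rfl fun x _ => (hkey x).symm
    rw [h1, Finset.sum_add_distrib]
    congr 1
    rw [← Finset.sum_filter, Finset.sum_const, smul_eq_mul, mul_comm]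
  have hle := hopt σ'
  rw [hT', hT, hSr', hSr, hSl, hErase] at *
  omega
end

section
/- (Necessary balance condition.) Let σ be an imbalance-optimal ordering of K_{m,n} with parts X, Y, where y₁,...,y_n are the Y-vertices in σ-order and L_i (0 ≤ i ≤ n) is the set of X-vertices lying between y_i and y_{i+1} (L_0 before y₁, L_n after y_n). Then Σ_{i=0}^{⌊n/2⌋−1} |L_i| ≤ Σ_{i=⌊n/2⌋}^{n} |L_i|. -/
open Finset
open scoped Classical

/-- The set of `X`-vertices lying between the `i`-th and `(i+1)`-st `Y`-vertices
(0-based: all `Y`-vertices of index `< i` are to the left, all of index `≥ i` to the right). -/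
noncomputable def Lblock (m n : ℕ) (σ : (Fin m ⊕ Fin n) ≃ Fin (Fintype.card (Fin m ⊕ Fin n)))
    (ylist : Fin n → Fin n) (i : ℕ) : Finset (Fin m) :=
  univ.filter fun x =>
    (∀ j : Fin n, (j : ℕ) < i → σ (Sum.inr (ylist j)) < σ (Sum.inl x)) ∧
    (∀ j : Fin n, i ≤ (j : ℕ) → σ (Sum.inl x) < σ (Sum.inr (ylist j)))

namespace Stmt10Aux

variable {m n : ℕ}

noncomputable def bX (σ : (Fin m ⊕ Fin n) ≃ Fin (Fintype.card (Fin m ⊕ Fin n))) (x : Fin m) : ℕ :=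
  (univ.filter fun y : Fin n => σ (Sum.inr y) < σ (Sum.inl x)).card

noncomputable def cY (σ : (Fin m ⊕ Fin n) ≃ Fin (Fintype.card (Fin m ⊕ Fin n))) (y : Fin n) : ℕ :=
  (univ.filter fun x : Fin m => σ (Sum.inl x) < σ (Sum.inr y)).card

lemma vi_inl (σ : (Fin m ⊕ Fin n) ≃ Fin (Fintype.card (Fin m ⊕ Fin n))) (x : Fin m) :
    vertexImbalance (completeBipartiteGraph (Fin m) (Fin n)) σ (Sum.inl x)
      = ((2 * (bX σ x) : ℤ) - n).natAbs := by
  have h1 : (univ.filter fun u => (completeBipartiteGraph (Fin m) (Fin n)).Adj (Sum.inl x) u ∧ σ u < σ (Sum.inl x))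
      = (univ.filter fun y : Fin n => σ (Sum.inr y) < σ (Sum.inl x)).map ⟨Sum.inr, Sum.inr_injective⟩ := by
    ext u
    cases u with
    | inl a => simp [completeBipartiteGraph]
    | inr y => simp [completeBipartiteGraph]
  have h2 : (univ.filter fun u => (completeBipartiteGraph (Fin m) (Fin n)).Adj (Sum.inl x) u ∧ σ (Sum.inl x) < σ u)
      = (univ.filter fun y : Fin n => σ (Sum.inl x) < σ (Sum.inr y)).map ⟨Sum.inr, Sum.inr_injective⟩ := by
    ext u
    cases u with
    | inl a => simp [completeBipartiteGraph]
    | inr y => simp [completeBipartiteGraph]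
  have h3 : (univ.filter fun y : Fin n => σ (Sum.inl x) < σ (Sum.inr y)).card = n - bX σ x := by
    have e : (univ.filter fun y : Fin n => σ (Sum.inl x) < σ (Sum.inr y)) =
        (univ.filter fun y : Fin n => ¬ σ (Sum.inr y) < σ (Sum.inl x)) := by
      apply Finset.filter_congr
      intro y _
      have hne : σ (Sum.inr y) ≠ σ (Sum.inl x) := by
        intro h; exact absurd (σ.injective h) (by simp)
      constructor
      · exact fun h => lt_asymm h
      · intro h; exact lt_of_le_of_ne (le_of_not_gt h) (Ne.symm hne)
    have h4 := Finset.card_filter_add_card_filter_not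
      (s := (univ : Finset (Fin n))) (p := fun y : Fin n => σ (Sum.inr y) < σ (Sum.inl x))
    rw [e]
    rw [Finset.card_univ, Fintype.card_fin] at h4
    rw [bX] at *
    omega
  have hle : bX σ x ≤ n := by
    simpa [bX] using Finset.card_filter_le (univ : Finset (Fin n)) (fun y : Fin n => σ (Sum.inr y) < σ (Sum.inl x))
  rw [vertexImbalance, h1, h2, Finset.card_map, Finset.card_map, h3]
  show ((bX σ x : ℤ) - ((n - bX σ x : ℕ) : ℤ)).natAbs = _
  congr 1
  push_cast [Nat.cast_sub hle]
  ring

lemma vi_inr (σ : (Fin m ⊕ Fin n) ≃ Fin (Fintype.card (Fin m ⊕ Fin n))) (y : Fin n) :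
    vertexImbalance (completeBipartiteGraph (Fin m) (Fin n)) σ (Sum.inr y)
      = ((2 * (cY σ y) : ℤ) - m).natAbs := by
  have h1 : (univ.filter fun u => (completeBipartiteGraph (Fin m) (Fin n)).Adj (Sum.inr y) u ∧ σ u < σ (Sum.inr y))
      = (univ.filter fun x : Fin m => σ (Sum.inl x) < σ (Sum.inr y)).map ⟨Sum.inl, Sum.inl_injective⟩ := by
    ext u
    cases u with
    | inl a => simp [completeBipartiteGraph]
    | inr b => simp [completeBipartiteGraph]
  have h2 : (univ.filter fun u => (completeBipartiteGraph (Fin m) (Fin n)).Adj (Sum.inr y) u ∧ σ (Sum.inr y) < σ u)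
      = (univ.filter fun x : Fin m => σ (Sum.inr y) < σ (Sum.inl x)).map ⟨Sum.inl, Sum.inl_injective⟩ := by
    ext u
    cases u with
    | inl a => simp [completeBipartiteGraph]
    | inr b => simp [completeBipartiteGraph]
  have h3 : (univ.filter fun x : Fin m => σ (Sum.inr y) < σ (Sum.inl x)).card = m - cY σ y := by
    have e : (univ.filter fun x : Fin m => σ (Sum.inr y) < σ (Sum.inl x)) =
        (univ.filter fun x : Fin m => ¬ σ (Sum.inl x) < σ (Sum.inr y)) := by
      apply Finset.filter_congr
      intro x _
      have hne : σ (Sum.inl x) ≠ σ (Sum.inr y) := by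
        intro h; exact absurd (σ.injective h) (by simp)
      constructor
      · exact fun h => lt_asymm h
      · intro h; exact lt_of_le_of_ne (le_of_not_gt h) (Ne.symm hne)
    have h4 := Finset.card_filter_add_card_filter_not
      (s := (univ : Finset (Fin m))) (p := fun x : Fin m => σ (Sum.inl x) < σ (Sum.inr y))
    rw [e]
    rw [Finset.card_univ, Fintype.card_fin] at h4
    rw [cY] at *
    omega
  have hle : cY σ y ≤ m := by
    simpa [cY] using Finset.card_filter_le (univ : Finset (Fin m)) (fun x : Fin m => σ (Sum.inl x) < σ (Sum.inr y))
  rw [vertexImbalance, h1, h2, Finset.card_map, Finset.card_map, h3]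
  show ((cY σ y : ℤ) - ((m - cY σ y : ℕ) : ℤ)).natAbs = _
  congr 1
  push_cast [Nat.cast_sub hle]
  ring

lemma total_eq (σ : (Fin m ⊕ Fin n) ≃ Fin (Fintype.card (Fin m ⊕ Fin n))) :
    totalImbalance (completeBipartiteGraph (Fin m) (Fin n)) σ =
      (∑ x : Fin m, ((2 * (bX σ x) : ℤ) - n).natAbs) +
      (∑ y : Fin n, ((2 * (cY σ y) : ℤ) - m).natAbs) := by
  rw [totalImbalance, Fintype.sum_sum_type]
  simp only [vi_inl, vi_inr]

lemma card_initseg (n i : ℕ) (hi : i ≤ n) : (univ.filter fun j : Fin n => (j:ℕ) < i).card = i := by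
  rw [← Fintype.card_subtype]
  rw [Fintype.card_congr (⟨fun j => (⟨j.1.1, j.2⟩ : Fin i), fun k => ⟨⟨k.1, lt_of_lt_of_le k.2 hi⟩, k.2⟩,
    fun j => by ext; rfl, fun k => by ext; rfl⟩ : {j : Fin n // (j:ℕ) < i} ≃ Fin i)]
  exact Fintype.card_fin i

noncomputable def idx (σ : (Fin m ⊕ Fin n) ≃ Fin (Fintype.card (Fin m ⊕ Fin n)))
    (ylist : Fin n → Fin n) (x : Fin m) : ℕ :=
  (univ.filter fun j : Fin n => σ (Sum.inr (ylist j)) < σ (Sum.inl x)).card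

section
variable (σ : (Fin m ⊕ Fin n) ≃ Fin (Fintype.card (Fin m ⊕ Fin n))) (ylist : Fin n → Fin n)
  (hmono : StrictMono fun i : Fin n => σ (Sum.inr (ylist i)))

lemma ne_xy (x : Fin m) (j : Fin n) : σ (Sum.inl x) ≠ σ (Sum.inr (ylist j)) := by
  intro h; exact absurd (σ.injective h) (by simp)

include hmono in
lemma downward {x : Fin m} {j j' : Fin n} (hle : j' ≤ j)
    (hj : σ (Sum.inr (ylist j)) < σ (Sum.inl x)) : σ (Sum.inr (ylist j')) < σ (Sum.inl x) :=
  lt_of_le_of_lt (hmono.monotone hle) hj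

lemma idx_le (x : Fin m) : idx σ ylist x ≤ n := by
  simpa [idx] using Finset.card_filter_le (univ : Finset (Fin n))
    (fun j : Fin n => σ (Sum.inr (ylist j)) < σ (Sum.inl x))

include hmono in
lemma mem_Lblock_iff {i : ℕ} (hi : i ≤ n) (x : Fin m) :
    x ∈ Lblock m n σ ylist i ↔ idx σ ylist x = i := by
  rw [Lblock, Finset.mem_filter]
  simp only [Finset.mem_univ, true_and]
  constructor
  · rintro ⟨h1, h2⟩
    have hS : (univ.filter fun j : Fin n => σ (Sum.inr (ylist j)) < σ (Sum.inl x))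
        = univ.filter fun j : Fin n => (j:ℕ) < i := by
      apply Finset.filter_congr
      intro j _
      constructor
      · intro hj
        by_contra hni
        exact lt_asymm hj (h2 j (le_of_not_gt hni))
      · exact h1 j
    rw [idx, hS, card_initseg n i hi]
  · intro hidx
    constructor
    · intro j hj
      by_contra hnj
      have hsub : (univ.filter fun j' : Fin n => σ (Sum.inr (ylist j')) < σ (Sum.inl x))
          ⊆ univ.filter fun j' : Fin n => (j':ℕ) < (j:ℕ) := by
        intro j' hj'
        rw [Finset.mem_filter] at hj' ⊢
        refine ⟨Finset.mem_univ _, ?_⟩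
        by_contra hge
        have hle2 : j ≤ j' := by
          rw [Fin.le_def]
          exact le_of_not_gt (by simpa using hge)
        exact hnj (downward σ ylist hmono hle2 hj'.2)
      have := Finset.card_le_card hsub
      rw [card_initseg n j (le_of_lt j.2)] at this
      rw [idx] at hidx
      omega
    · intro j hj
      by_contra hnj
      have hjS : σ (Sum.inr (ylist j)) < σ (Sum.inl x) :=
        lt_of_le_of_ne (le_of_not_gt hnj) (Ne.symm (ne_xy σ ylist x j))
      have hsub : (univ.filter fun j' : Fin n => (j':ℕ) < (j:ℕ)+1)
          ⊆ univ.filter fun j' : Fin n => σ (Sum.inr (ylist j')) < σ (Sum.inl x) := by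
        intro j' hj'
        rw [Finset.mem_filter] at hj' ⊢
        refine ⟨Finset.mem_univ _, ?_⟩
        have hle2 : j' ≤ j := by
          rw [Fin.le_def]
          omega
        exact downward σ ylist hmono hle2 hjS
      have := Finset.card_le_card hsub
      rw [card_initseg n ((j:ℕ)+1) j.2] at this
      rw [idx] at hidx
      omega

include hmono in
lemma sum_Lblock_card (s : Finset ℕ) (hs : ∀ i ∈ s, i ≤ n) :
    ∑ i ∈ s, (Lblock m n σ ylist i).card
      = (univ.filter fun x : Fin m => idx σ ylist x ∈ s).card := by
  rw [Finset.card_eq_sum_card_fiberwise (f := idx σ ylist) (t := s) (s := univ.filter fun x : Fin m => idx σ ylist x ∈ s)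
    (fun x hx => (Finset.mem_filter.mp hx).2)]
  apply Finset.sum_congr rfl
  intro i hi
  congr 1
  ext x
  rw [mem_Lblock_iff σ ylist hmono (hs i hi) x]
  simp only [Finset.mem_filter, Finset.mem_univ, true_and]
  constructor
  · intro h; exact ⟨h ▸ hi, h⟩
  · tauto

lemma reindex (hbij : Function.Bijective ylist) (P : Fin n → Prop) :
    (univ.filter fun j : Fin n => P (ylist j)).card = (univ.filter P).card := by
  apply Finset.card_bij (fun j _ => ylist j)
  · intro j hj
    rw [Finset.mem_filter] at hj ⊢
    exact ⟨Finset.mem_univ _, hj.2⟩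
  · intro a ha b hb hab
    exact hbij.1 hab
  · intro y hy
    obtain ⟨j, rfl⟩ := hbij.2 y
    rw [Finset.mem_filter] at hy
    exact ⟨j, by rw [Finset.mem_filter]; exact ⟨Finset.mem_univ _, hy.2⟩, rfl⟩

end

end Stmt10Aux

open Stmt10Aux in
theorem stmt10 (m n : ℕ)
    (σ : (Fin m ⊕ Fin n) ≃ Fin (Fintype.card (Fin m ⊕ Fin n)))
    (hopt : ∀ τ : (Fin m ⊕ Fin n) ≃ Fin (Fintype.card (Fin m ⊕ Fin n)),
      totalImbalance (completeBipartiteGraph (Fin m) (Fin n)) σ ≤ totalImbalance (completeBipartiteGraph (Fin m) (Fin n)) τ)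
    (ylist : Fin n → Fin n) (hbij : Function.Bijective ylist)
    (hmono : StrictMono fun i : Fin n => σ (Sum.inr (ylist i)))
    :
    ∑ i ∈ Finset.range (n / 2), (Lblock m n σ ylist i).card ≤
      ∑ i ∈ Finset.Icc (n / 2) n, (Lblock m n σ ylist i).card := by
  set h := n / 2 with hh
  have hhn : h ≤ n := Nat.div_le_self n 2
  rw [sum_Lblock_card σ ylist hmono (Finset.range h)
    (fun i hi => le_trans (le_of_lt (Finset.mem_range.mp hi)) hhn)]
  rw [sum_Lblock_card σ ylist hmono (Finset.Icc h n)
    (fun i hi => (Finset.mem_Icc.mp hi).2)]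
  by_contra hcon
  push_neg at hcon
  -- rewrite the RHS set as the complement of the LHS set
  have hsets : (univ.filter fun x : Fin m => idx σ ylist x ∈ Finset.Icc h n)
      = univ.filter fun x : Fin m => ¬ idx σ ylist x ∈ Finset.range h := by
    apply Finset.filter_congr
    intro x _
    have := idx_le σ ylist x
    simp only [Finset.mem_Icc, Finset.mem_range]
    omega
  rw [hsets] at hcon
  have hcompl := Finset.card_filter_add_card_filter_not
    (s := (univ : Finset (Fin m))) (p := fun x : Fin m => idx σ ylist x ∈ Finset.range h)
  rw [Finset.card_univ, Fintype.card_fin] at hcompl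
  set A : Finset (Fin m) := univ.filter fun x : Fin m => idx σ ylist x ∈ Finset.range h with hA
  set q := A.card with hq
  have hq2 : m + 1 ≤ 2 * q := by omega
  have hAne : A.Nonempty := Finset.card_pos.mp (by omega)
  obtain ⟨xs, hxsA, hmax⟩ := Finset.exists_max_image A (fun x => σ (Sum.inl x)) hAne
  set i := idx σ ylist xs with hi
  have hih : i < h := by
    have := (Finset.mem_filter.mp hxsA).2
    simpa using this
  have hin : i < n := lt_of_lt_of_le hih hhn
  have hn2 : 2 * h ≤ n := by omega
  set jI : Fin n := ⟨i, hin⟩ with hjI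
  set yi : Fin n := ylist jI with hyi
  -- block conditions for xs
  have hblk : xs ∈ Lblock m n σ ylist i := (mem_Lblock_iff σ ylist hmono (le_of_lt hin) xs).mpr rfl
  rw [Lblock, Finset.mem_filter] at hblk
  obtain ⟨-, hc1, hc2⟩ := hblk
  have hK1 : σ (Sum.inl xs) < σ (Sum.inr yi) := hc2 jI (le_refl _)
  -- every x strictly before yi is in A and at most xs
  have hK2 : ∀ x : Fin m, σ (Sum.inl x) < σ (Sum.inr yi) → x ∈ A := by
    intro x hx
    have hsub : (univ.filter fun j : Fin n => σ (Sum.inr (ylist j)) < σ (Sum.inl x))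
        ⊆ univ.filter fun j : Fin n => (j:ℕ) < i := by
      intro j hj
      rw [Finset.mem_filter] at hj ⊢
      refine ⟨Finset.mem_univ _, ?_⟩
      have hlt : σ (Sum.inr (ylist j)) < σ (Sum.inr (ylist jI)) := lt_trans hj.2 hx
      have : j < jI := hmono.lt_iff_lt.mp hlt
      exact this
    have hcard := Finset.card_le_card hsub
    rw [card_initseg n i (le_of_lt hin)] at hcard
    rw [hA, Finset.mem_filter]
    refine ⟨Finset.mem_univ _, ?_⟩
    rw [Finset.mem_range]
    have : idx σ ylist x ≤ i := hcard
    omega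
  have hK2' : ∀ x : Fin m, σ (Sum.inl x) < σ (Sum.inr yi) → σ (Sum.inl x) ≤ σ (Sum.inl xs) :=
    fun x hx => hmax x (hK2 x hx)
  -- membership in A is equivalent to being ≤ xs in position
  have hAiff : ∀ x : Fin m, x ∈ A ↔ σ (Sum.inl x) ≤ σ (Sum.inl xs) := by
    intro x
    constructor
    · exact fun hx => hmax x hx
    · intro hx
      exact hK2 x (lt_of_le_of_lt hx hK1)
  -- the improved ordering
  set τ : (Fin m ⊕ Fin n) ≃ Fin (Fintype.card (Fin m ⊕ Fin n)) :=
    (Equiv.swap (Sum.inl xs) (Sum.inr yi)).trans σ with hτ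
  have hτxs : τ (Sum.inl xs) = σ (Sum.inr yi) := by
    simp [hτ, Equiv.swap_apply_left]
  have hτyi : τ (Sum.inr yi) = σ (Sum.inl xs) := by
    simp [hτ, Equiv.swap_apply_right]
  have hτx : ∀ x : Fin m, x ≠ xs → τ (Sum.inl x) = σ (Sum.inl x) := by
    intro x hx
    have h1 : (Sum.inl x : Fin m ⊕ Fin n) ≠ Sum.inl xs := by simpa using hx
    have h2 : (Sum.inl x : Fin m ⊕ Fin n) ≠ Sum.inr yi := by simp
    rw [hτ]
    simp only [Equiv.trans_apply]
    rw [Equiv.swap_apply_of_ne_of_ne h1 h2]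
  have hτy : ∀ y : Fin n, y ≠ yi → τ (Sum.inr y) = σ (Sum.inr y) := by
    intro y hy
    have h1 : (Sum.inr y : Fin m ⊕ Fin n) ≠ Sum.inl xs := by simp
    have h2 : (Sum.inr y : Fin m ⊕ Fin n) ≠ Sum.inr yi := by simpa using hy
    rw [hτ]
    simp only [Equiv.trans_apply]
    rw [Equiv.swap_apply_of_ne_of_ne h1 h2]
  -- bX unchanged away from xs
  have hbx : ∀ x : Fin m, x ≠ xs → bX τ x = bX σ x := by
    intro x hx
    rw [bX, bX]
    congr 1
    apply Finset.filter_congr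
    intro y _
    rw [hτx x hx]
    by_cases hy : y = yi
    · subst hy
      rw [hτyi]
      constructor
      · intro hlt
        by_contra hge
        have : σ (Sum.inl x) < σ (Sum.inr yi) :=
          lt_of_le_of_ne (le_of_not_gt hge) (ne_xy σ ylist x jI)
        exact absurd (hK2' x this) (not_le.mpr hlt)
      · intro hlt
        exact lt_trans hK1 hlt
    · rw [hτy y hy]
  -- cY unchanged away from yi
  have hcy : ∀ y : Fin n, y ≠ yi → cY τ y = cY σ y := by
    intro y hy
    rw [cY, cY]
    congr 1
    apply Finset.filter_congr
    intro x _
    rw [hτy y hy]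
    by_cases hx : x = xs
    · subst hx
      rw [hτxs]
      obtain ⟨j, rfl⟩ := hbij.2 y
      have hjne : j ≠ jI := fun hj => hy (by rw [hj])
      constructor
      · intro hlt
        exact lt_trans hK1 hlt
      · intro hlt
        rcases lt_trichotomy (σ (Sum.inr (ylist jI))) (σ (Sum.inr (ylist j))) with h1 | h1 | h1
        · exact h1
        · exact absurd (hbij.1 (Sum.inr_injective (σ.injective h1))).symm hjne
        · have : j < jI := hmono.lt_iff_lt.mp h1
          have hji : (j:ℕ) < i := by exact this
          exact absurd (hc1 j hji) (lt_asymm hlt)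
    · rw [hτx x hx]
  -- bX at xs increases by one
  have hbxs0 : bX σ xs = i := by
    rw [hi, idx, bX]
    have := (reindex ylist hbij (fun y => σ (Sum.inr y) < σ (Sum.inl xs))).symm
    convert this using 2 <;> congr
  have hbxs : bX τ xs = i + 1 := by
    rw [bX, hτxs]
    have hset : (univ.filter fun y : Fin n => τ (Sum.inr y) < σ (Sum.inr yi))
        = insert yi (univ.filter fun y : Fin n => σ (Sum.inr y) < σ (Sum.inl xs)) := by
      ext y
      rw [Finset.mem_insert, Finset.mem_filter, Finset.mem_filter]
      by_cases hy : y = yi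
      · subst hy
        simp [hτyi, hK1]
      · rw [hτy y hy]
        simp only [Finset.mem_univ, true_and]
        constructor
        · intro hlt
          obtain ⟨j, rfl⟩ := hbij.2 y
          have : j < jI := hmono.lt_iff_lt.mp hlt
          have hji : (j:ℕ) < i := by exact this
          exact Or.inr (hc1 j hji)
        · rintro (rfl | hlt)
          · exact absurd rfl hy
          · exact lt_trans hlt hK1
    rw [hset, Finset.card_insert_of_notMem (by
      rw [Finset.mem_filter]
      rintro ⟨-, hlt⟩
      exact lt_asymm hK1 hlt)]
    rw [← bX, hbxs0]
  -- cY at yi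
  have hcyi0 : cY σ yi = q := by
    rw [cY, hq]
    congr 1
    ext x
    rw [Finset.mem_filter]
    simp only [Finset.mem_univ, true_and]
    rw [hAiff x]
    constructor
    · intro hlt
      exact hK2' x hlt
    · intro hle
      exact lt_of_le_of_lt hle hK1
  have hcyi : cY τ yi = q - 1 := by
    rw [cY, hτyi]
    have hset : (univ.filter fun x : Fin m => τ (Sum.inl x) < σ (Sum.inl xs))
        = A.erase xs := by
      ext x
      rw [Finset.mem_erase, Finset.mem_filter]
      by_cases hx : x = xs
      · subst hx
        rw [hτxs]
        simp [lt_asymm hK1]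
      · rw [hτx x hx]
        simp only [Finset.mem_univ, true_and, hx, false_iff, not_false_iff, true_and,
          ne_eq, not_false_eq_true]
        rw [hAiff x]
        constructor
        · intro hlt
          exact le_of_lt hlt
        · intro hle
          rcases lt_or_eq_of_le hle with hlt | heq
          · exact hlt
          · exact absurd (Sum.inl_injective (σ.injective heq)) hx
    rw [hset, Finset.card_erase_of_mem hxsA, ← hq]
  -- compare totals
  have hτlt : totalImbalance (completeBipartiteGraph (Fin m) (Fin n)) τ
      < totalImbalance (completeBipartiteGraph (Fin m) (Fin n)) σ := by
    rw [total_eq, total_eq]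
    have hx_lt : ∑ x : Fin m, ((2 * (bX τ x) : ℤ) - n).natAbs
        < ∑ x : Fin m, ((2 * (bX σ x) : ℤ) - n).natAbs := by
      apply Finset.sum_lt_sum
      · intro x _
        by_cases hx : x = xs
        · subst hx
          rw [hbxs, hbxs0]
          have h2i : 2 * (i + 1) ≤ n := by omega
          omega
        · rw [hbx x hx]
      · refine ⟨xs, Finset.mem_univ _, ?_⟩
        rw [hbxs, hbxs0]
        have h2i : 2 * (i + 1) ≤ n := by omega
        omega
    have hy_le : ∑ y : Fin n, ((2 * (cY τ y) : ℤ) - m).natAbs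
        ≤ ∑ y : Fin n, ((2 * (cY σ y) : ℤ) - m).natAbs := by
      apply Finset.sum_le_sum
      intro y _
      by_cases hy : y = yi
      · subst hy
        rw [hcyi, hcyi0]
        have hqm : q ≤ m := by
          rw [hq, hA]
          simpa using Finset.card_filter_le (univ : Finset (Fin m)) _
        have hq1 : 1 ≤ q := by omega
        have : ((q - 1 : ℕ) : ℤ) = (q : ℤ) - 1 := by
          rw [Nat.cast_sub hq1]
          simp
        rw [this]
        omega
      · rw [hcy y hy]
    omega
  exact absurd (hopt τ) (not_le.mpr hτlt)
end

section
/- (Necessary balance condition, right version.) Let σ be an imbalance-optimal ordering of K_{m,n} with Y-vertices y₁,...,y_n in σ-order and blocks L_0,...,L_n of X-vertices between consecutive Y-vertices. Then Σ_{i=0}^{⌈n/2⌉} |L_i| ≥ Σ_{i=⌈n/2⌉+1}^{n} |L_i|. -/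
open Finset
open scoped Classical

lemma card_filter_lt_fin (n i : ℕ) (h : i ≤ n) : (univ.filter fun j : Fin n => (j:ℕ) < i).card = i := by
  have h2 : Finset.filter (fun k => k < i) (Finset.range n) = Finset.range i := by
    ext k; simp only [Finset.mem_filter, Finset.mem_range]; omega
  calc (univ.filter fun j : Fin n => (j:ℕ) < i).card
      = ∑ j : Fin n, if (j:ℕ) < i then 1 else 0 := by rw [Finset.card_filter]
    _ = ∑ k ∈ Finset.range n, if k < i then 1 else 0 :=
        Fin.sum_univ_eq_sum_range (fun k => if k < i then (1:ℕ) else 0) n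
    _ = (Finset.filter (fun k => k < i) (Finset.range n)).card := (Finset.card_filter _ _).symm
    _ = i := by rw [h2, Finset.card_range]

lemma vI_inl (m n : ℕ) (σ : (Fin m ⊕ Fin n) ≃ Fin (Fintype.card (Fin m ⊕ Fin n))) (x : Fin m) :
    vertexImbalance (completeBipartiteGraph (Fin m) (Fin n)) σ (Sum.inl x)
      = (2 * ((univ.filter fun j : Fin n => σ (Sum.inr j) < σ (Sum.inl x)).card : ℤ) - n).natAbs := by
  have h1 : (univ.filter fun u => (completeBipartiteGraph (Fin m) (Fin n)).Adj (Sum.inl x) u ∧ σ u < σ (Sum.inl x)).card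
      = (univ.filter fun j : Fin n => σ (Sum.inr j) < σ (Sum.inl x)).card := by
    rw [Finset.card_filter, Finset.card_filter, Fintype.sum_sum_type]
    simp
  have h2 : (univ.filter fun u => (completeBipartiteGraph (Fin m) (Fin n)).Adj (Sum.inl x) u ∧ σ (Sum.inl x) < σ u).card
      = (univ.filter fun j : Fin n => σ (Sum.inl x) < σ (Sum.inr j)).card := by
    rw [Finset.card_filter, Finset.card_filter, Fintype.sum_sum_type]
    simp
  have h3 : (univ.filter fun j : Fin n => σ (Sum.inr j) < σ (Sum.inl x)).card
      + (univ.filter fun j : Fin n => σ (Sum.inl x) < σ (Sum.inr j)).card = n := by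
    have h4 := Finset.card_filter_add_card_filter_not (s := (univ : Finset (Fin n)))
      (p := fun j => σ (Sum.inr j) < σ (Sum.inl x))
    rw [Finset.card_univ, Fintype.card_fin] at h4
    have heq : (univ.filter fun j : Fin n => ¬ σ (Sum.inr j) < σ (Sum.inl x))
        = (univ.filter fun j : Fin n => σ (Sum.inl x) < σ (Sum.inr j)) := by
      apply Finset.filter_congr
      intro j _
      have hne : σ (Sum.inl x) ≠ σ (Sum.inr j) := by
        simp [σ.injective.ne_iff]
      simp only [not_lt]
      exact ⟨fun h => lt_of_le_of_ne h hne, fun h => h.le⟩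
    rw [heq] at h4
    exact h4
  unfold vertexImbalance
  rw [h1, h2]
  omega

lemma vI_inr (m n : ℕ) (σ : (Fin m ⊕ Fin n) ≃ Fin (Fintype.card (Fin m ⊕ Fin n))) (y : Fin n) :
    vertexImbalance (completeBipartiteGraph (Fin m) (Fin n)) σ (Sum.inr y)
      = (2 * ((univ.filter fun x : Fin m => σ (Sum.inl x) < σ (Sum.inr y)).card : ℤ) - m).natAbs := by
  have h1 : (univ.filter fun u => (completeBipartiteGraph (Fin m) (Fin n)).Adj (Sum.inr y) u ∧ σ u < σ (Sum.inr y)).card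
      = (univ.filter fun x : Fin m => σ (Sum.inl x) < σ (Sum.inr y)).card := by
    rw [Finset.card_filter, Finset.card_filter, Fintype.sum_sum_type]
    simp
  have h2 : (univ.filter fun u => (completeBipartiteGraph (Fin m) (Fin n)).Adj (Sum.inr y) u ∧ σ (Sum.inr y) < σ u).card
      = (univ.filter fun x : Fin m => σ (Sum.inr y) < σ (Sum.inl x)).card := by
    rw [Finset.card_filter, Finset.card_filter, Fintype.sum_sum_type]
    simp
  have h3 : (univ.filter fun x : Fin m => σ (Sum.inl x) < σ (Sum.inr y)).card
      + (univ.filter fun x : Fin m => σ (Sum.inr y) < σ (Sum.inl x)).card = m := by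
    have h4 := Finset.card_filter_add_card_filter_not (s := (univ : Finset (Fin m)))
      (p := fun x => σ (Sum.inl x) < σ (Sum.inr y))
    rw [Finset.card_univ, Fintype.card_fin] at h4
    have heq : (univ.filter fun x : Fin m => ¬ σ (Sum.inl x) < σ (Sum.inr y))
        = (univ.filter fun x : Fin m => σ (Sum.inr y) < σ (Sum.inl x)) := by
      apply Finset.filter_congr
      intro x _
      have hne : σ (Sum.inr y) ≠ σ (Sum.inl x) := by
        simp [σ.injective.ne_iff]
      simp only [not_lt]
      exact ⟨fun h => lt_of_le_of_ne h hne, fun h => h.le⟩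
    rw [heq] at h4
    exact h4
  unfold vertexImbalance
  rw [h1, h2]
  omega

noncomputable def bidx (m n : ℕ) (σ : (Fin m ⊕ Fin n) ≃ Fin (Fintype.card (Fin m ⊕ Fin n)))
    (ylist : Fin n → Fin n) (x : Fin m) : ℕ :=
  (univ.filter fun j : Fin n => σ (Sum.inr (ylist j)) < σ (Sum.inl x)).card

lemma bidx_le (m n : ℕ) (σ : (Fin m ⊕ Fin n) ≃ Fin (Fintype.card (Fin m ⊕ Fin n)))
    (ylist : Fin n → Fin n) (x : Fin m) : bidx m n σ ylist x ≤ n := by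
  have := Finset.card_filter_le (univ : Finset (Fin n))
    (fun j => σ (Sum.inr (ylist j)) < σ (Sum.inl x))
  simpa [bidx] using this

lemma mem_bidx_iff (m n : ℕ) (σ : (Fin m ⊕ Fin n) ≃ Fin (Fintype.card (Fin m ⊕ Fin n)))
    (ylist : Fin n → Fin n)
    (hmono : StrictMono fun i : Fin n => σ (Sum.inr (ylist i))) (x : Fin m) (j : Fin n) :
    σ (Sum.inr (ylist j)) < σ (Sum.inl x) ↔ (j : ℕ) < bidx m n σ ylist x := by
  set S := (univ.filter fun j : Fin n => σ (Sum.inr (ylist j)) < σ (Sum.inl x)) with hS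
  have hbS : bidx m n σ ylist x = S.card := rfl
  constructor
  · intro hj
    have hsub : Finset.Iic j ⊆ S := by
      intro k hk
      rw [Finset.mem_Iic] at hk
      rw [hS, Finset.mem_filter]
      exact ⟨Finset.mem_univ _, lt_of_le_of_lt (hmono.monotone hk) hj⟩
    have := Finset.card_le_card hsub
    rw [Fin.card_Iic] at this
    omega
  · intro hj
    by_contra hmem
    have hsub : S ⊆ Finset.Iio j := by
      intro k hk
      rw [hS, Finset.mem_filter] at hk
      rw [Finset.mem_Iio]
      by_contra hkj
      push_neg at hkj
      exact hmem (lt_of_le_of_lt (hmono.monotone hkj) hk.2)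
    have := Finset.card_le_card hsub
    rw [Fin.card_Iio] at this
    omega

lemma mem_Lblock_iff (m n : ℕ) (σ : (Fin m ⊕ Fin n) ≃ Fin (Fintype.card (Fin m ⊕ Fin n)))
    (ylist : Fin n → Fin n)
    (hmono : StrictMono fun i : Fin n => σ (Sum.inr (ylist i))) (x : Fin m) (i : ℕ) (hi : i ≤ n) :
    x ∈ Lblock m n σ ylist i ↔ bidx m n σ ylist x = i := by
  constructor
  · intro hx
    rw [Lblock, Finset.mem_filter] at hx
    obtain ⟨-, c1, c2⟩ := hx
    have hset : (univ.filter fun j : Fin n => σ (Sum.inr (ylist j)) < σ (Sum.inl x))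
        = (univ.filter fun j : Fin n => (j:ℕ) < i) := by
      apply Finset.filter_congr
      intro j _
      constructor
      · intro h
        by_contra hji
        push_neg at hji
        exact absurd h (asymm (c2 j hji))
      · exact c1 j
    rw [bidx, hset, card_filter_lt_fin n i hi]
  · intro hb
    rw [Lblock, Finset.mem_filter]
    refine ⟨Finset.mem_univ _, fun j hj => ?_, fun j hj => ?_⟩
    · exact (mem_bidx_iff m n σ ylist hmono x j).mpr (by omega)
    · have hnot : ¬ σ (Sum.inr (ylist j)) < σ (Sum.inl x) := by
        rw [mem_bidx_iff m n σ ylist hmono x j]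
        omega
      have hne : σ (Sum.inl x) ≠ σ (Sum.inr (ylist j)) := by
        simp [σ.injective.ne_iff]
      exact lt_of_le_of_ne (not_lt.mp hnot) hne

lemma Lblock_eq_fiber (m n : ℕ) (σ : (Fin m ⊕ Fin n) ≃ Fin (Fintype.card (Fin m ⊕ Fin n)))
    (ylist : Fin n → Fin n)
    (hmono : StrictMono fun i : Fin n => σ (Sum.inr (ylist i))) (i : ℕ) (hi : i ≤ n) :
    Lblock m n σ ylist i = univ.filter fun x => bidx m n σ ylist x = i := by
  ext x
  rw [mem_Lblock_iff m n σ ylist hmono x i hi, Finset.mem_filter]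
  simp

section Swap
variable (m n : ℕ) (σ : (Fin m ⊕ Fin n) ≃ Fin (Fintype.card (Fin m ⊕ Fin n)))
  (x0 : Fin m) (k : Fin n)

lemma tau_inl : ((Equiv.swap (Sum.inl x0) (Sum.inr k)).trans σ) (Sum.inl x0) = σ (Sum.inr k) := by
  simp [Equiv.trans_apply, Equiv.swap_apply_left]

lemma tau_inr : ((Equiv.swap (Sum.inl x0) (Sum.inr k)).trans σ) (Sum.inr k) = σ (Sum.inl x0) := by
  simp [Equiv.trans_apply, Equiv.swap_apply_right]

lemma tau_other (w : Fin m ⊕ Fin n) (hw1 : w ≠ Sum.inl x0) (hw2 : w ≠ Sum.inr k) :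
    ((Equiv.swap (Sum.inl x0) (Sum.inr k)).trans σ) w = σ w := by
  simp [Equiv.trans_apply, Equiv.swap_apply_of_ne_of_ne hw1 hw2]

lemma vI_swap_other
    (hadj : ((σ (Sum.inr k)) : ℕ) + 1 = ((σ (Sum.inl x0)) : ℕ))
    (w : Fin m ⊕ Fin n) (hw1 : w ≠ Sum.inl x0) (hw2 : w ≠ Sum.inr k) :
    vertexImbalance (completeBipartiteGraph (Fin m) (Fin n))
      ((Equiv.swap (Sum.inl x0) (Sum.inr k)).trans σ) w
    = vertexImbalance (completeBipartiteGraph (Fin m) (Fin n)) σ w := by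
  set τ := (Equiv.swap (Sum.inl x0) (Sum.inr k)).trans σ with hτ
  cases w with
  | inl x' =>
    have hx' : x' ≠ x0 := fun h => hw1 (by rw [h])
    rw [vI_inl, vI_inl]
    have hset : (univ.filter fun j : Fin n => τ (Sum.inr j) < τ (Sum.inl x')) =
        (univ.filter fun j : Fin n => σ (Sum.inr j) < σ (Sum.inl x')) := by
      apply Finset.filter_congr
      intro j _
      rw [tau_other m n σ x0 k (Sum.inl x') hw1 hw2]
      by_cases hj : j = k
      · subst hj
        rw [tau_inr]
        have h1 : σ (Sum.inl x') ≠ σ (Sum.inl x0) :=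
          fun h => hx' (Sum.inl_injective (σ.injective h))
        have h2 : σ (Sum.inl x') ≠ σ (Sum.inr j) :=
          fun h => Sum.inl_ne_inr (σ.injective h)
        have h1' : (σ (Sum.inl x') : ℕ) ≠ (σ (Sum.inl x0) : ℕ) := fun h => h1 (Fin.ext h)
        have h2' : (σ (Sum.inl x') : ℕ) ≠ (σ (Sum.inr j) : ℕ) := fun h => h2 (Fin.ext h)
        rw [Fin.lt_def, Fin.lt_def]
        omega
      · rw [tau_other m n σ x0 k (Sum.inr j) (by simp) (by simp [hj])]
    rw [hset]
  | inr y' =>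
    have hy' : y' ≠ k := fun h => hw2 (by rw [h])
    rw [vI_inr, vI_inr]
    have hset : (univ.filter fun x : Fin m => τ (Sum.inl x) < τ (Sum.inr y')) =
        (univ.filter fun x : Fin m => σ (Sum.inl x) < σ (Sum.inr y')) := by
      apply Finset.filter_congr
      intro x _
      rw [tau_other m n σ x0 k (Sum.inr y') hw1 hw2]
      by_cases hx : x = x0
      · subst hx
        rw [tau_inl]
        have h1 : σ (Sum.inr y') ≠ σ (Sum.inr k) :=
          fun h => hy' (Sum.inr_injective (σ.injective h))
        have h2 : σ (Sum.inr y') ≠ σ (Sum.inl x) :=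
          fun h => Sum.inl_ne_inr (σ.injective h.symm)
        have h1' : (σ (Sum.inr y') : ℕ) ≠ (σ (Sum.inr k) : ℕ) := fun h => h1 (Fin.ext h)
        have h2' : (σ (Sum.inr y') : ℕ) ≠ (σ (Sum.inl x) : ℕ) := fun h => h2 (Fin.ext h)
        rw [Fin.lt_def, Fin.lt_def]
        omega
      · rw [tau_other m n σ x0 k (Sum.inl x) (by simp [hx]) (by simp)]
    rw [hset]

lemma swap_count_u (hadj : ((σ (Sum.inr k)) : ℕ) + 1 = ((σ (Sum.inl x0)) : ℕ)) :
    (univ.filter fun j : Fin n =>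
        ((Equiv.swap (Sum.inl x0) (Sum.inr k)).trans σ) (Sum.inr j) <
        ((Equiv.swap (Sum.inl x0) (Sum.inr k)).trans σ) (Sum.inl x0))
      = (univ.filter fun j : Fin n => σ (Sum.inr j) < σ (Sum.inr k)) := by
  apply Finset.filter_congr
  intro j _
  rw [tau_inl]
  by_cases hj : j = k
  · subst hj
    rw [tau_inr]
    rw [Fin.lt_def, Fin.lt_def]
    omega
  · rw [tau_other m n σ x0 k (Sum.inr j) (by simp) (by simp [hj])]

lemma swap_count_v (hadj : ((σ (Sum.inr k)) : ℕ) + 1 = ((σ (Sum.inl x0)) : ℕ)) :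
    (univ.filter fun x : Fin m =>
        ((Equiv.swap (Sum.inl x0) (Sum.inr k)).trans σ) (Sum.inl x) <
        ((Equiv.swap (Sum.inl x0) (Sum.inr k)).trans σ) (Sum.inr k))
      = insert x0 (univ.filter fun x : Fin m => σ (Sum.inl x) < σ (Sum.inr k)) := by
  ext x
  rw [Finset.mem_insert, Finset.mem_filter, Finset.mem_filter, tau_inr]
  by_cases hx : x = x0
  · subst hx
    rw [tau_inl]
    simp only [Finset.mem_univ, true_and]
    constructor
    · intro _; left; trivial
    · intro _; rw [Fin.lt_def]; omega
  · rw [tau_other m n σ x0 k (Sum.inl x) (by simp [hx]) (by simp)]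
    simp only [Finset.mem_univ, true_and]
    have h2 : σ (Sum.inl x) ≠ σ (Sum.inl x0) :=
      fun h => hx (Sum.inl_injective (σ.injective h))
    have h2' : (σ (Sum.inl x) : ℕ) ≠ (σ (Sum.inl x0) : ℕ) := fun h => h2 (Fin.ext h)
    have h3 : σ (Sum.inl x) ≠ σ (Sum.inr k) :=
      fun h => Sum.inl_ne_inr (σ.injective h)
    have h3' : (σ (Sum.inl x) : ℕ) ≠ (σ (Sum.inr k) : ℕ) := fun h => h3 (Fin.ext h)
    rw [Fin.lt_def, Fin.lt_def]
    constructor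
    · intro h; right; omega
    · rintro (h | h)
      · exact absurd h hx
      · omega

end Swap

lemma reindex_card (n : ℕ) (ylist : Fin n → Fin n) (hbij : Function.Bijective ylist)
    (P : Fin n → Prop) [DecidablePred P] :
    (univ.filter fun j : Fin n => P (ylist j)).card = (univ.filter P).card := by
  apply Finset.card_equiv (Equiv.ofBijective ylist hbij)
  intro j
  simp [Equiv.ofBijective]

theorem stmt11 (m n : ℕ)
    (σ : (Fin m ⊕ Fin n) ≃ Fin (Fintype.card (Fin m ⊕ Fin n)))
    (hopt : ∀ τ : (Fin m ⊕ Fin n) ≃ Fin (Fintype.card (Fin m ⊕ Fin n)),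
      totalImbalance (completeBipartiteGraph (Fin m) (Fin n)) σ ≤ totalImbalance (completeBipartiteGraph (Fin m) (Fin n)) τ)
    (ylist : Fin n → Fin n) (hbij : Function.Bijective ylist)
    (hmono : StrictMono fun i : Fin n => σ (Sum.inr (ylist i)))
    :
    ∑ i ∈ Finset.Icc ((n + 1) / 2 + 1) n, (Lblock m n σ ylist i).card ≤
      ∑ i ∈ Finset.range ((n + 1) / 2 + 1), (Lblock m n σ ylist i).card := by
  classical
  set c := (n + 1) / 2 with hc
  by_contra hcon
  push_neg at hcon
  set S := ∑ i ∈ Finset.range (c + 1), (Lblock m n σ ylist i).card with hSdef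
  set T := ∑ i ∈ Finset.Icc (c + 1) n, (Lblock m n σ ylist i).card with hTdef
  have hcn : c ≤ n := by omega
  -- the blocks partition the X side
  have hfib : (univ : Finset (Fin m)).card =
      ∑ i ∈ Finset.range (n + 1), (univ.filter fun x => bidx m n σ ylist x = i).card := by
    apply Finset.card_eq_sum_card_fiberwise
    intro x _
    rw [Finset.mem_coe, Finset.mem_range]
    have := bidx_le m n σ ylist x
    omega
  have hm : m = ∑ i ∈ Finset.range (n + 1), (Lblock m n σ ylist i).card := by
    have h0 : (univ : Finset (Fin m)).card = m := by simp
    calc m = (univ : Finset (Fin m)).card := h0.symm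
      _ = ∑ i ∈ Finset.range (n + 1), (univ.filter fun x => bidx m n σ ylist x = i).card := hfib
      _ = ∑ i ∈ Finset.range (n + 1), (Lblock m n σ ylist i).card := by
          apply Finset.sum_congr rfl
          intro i hi
          rw [Lblock_eq_fiber m n σ ylist hmono i (by rw [Finset.mem_range] at hi; omega)]
  have hsplit_range : ∑ i ∈ Finset.range (n + 1), (Lblock m n σ ylist i).card = S + T := by
    rw [Finset.range_eq_Ico, ← Finset.sum_Ico_consecutive _ (Nat.zero_le (c + 1)) (by omega : c + 1 ≤ n + 1),
      ← Finset.range_eq_Ico, Finset.Ico_add_one_right_eq_Icc]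
  have hST : S + T = m := by rw [hm, hsplit_range]
  have hSm : 2 * S < m := by omega
  -- minimal nonempty block beyond c
  have hTne : T ≠ 0 := by omega
  obtain ⟨i0', hi0'mem, hi0'ne⟩ := Finset.exists_ne_zero_of_sum_ne_zero hTne
  set I := (Finset.Icc (c + 1) n).filter (fun i => (Lblock m n σ ylist i).card ≠ 0) with hI
  have hInon : I.Nonempty := ⟨i0', Finset.mem_filter.mpr ⟨hi0'mem, hi0'ne⟩⟩
  set i0 := I.min' hInon with hi0def
  have hi0I : i0 ∈ I := Finset.min'_mem _ _
  rw [hI, Finset.mem_filter, Finset.mem_Icc] at hi0I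
  obtain ⟨⟨hi0c, hi0n⟩, hi0ne⟩ := hi0I
  have hmin : ∀ r, c + 1 ≤ r → r < i0 → (Lblock m n σ ylist r).card = 0 := by
    intro r h1 h2
    by_contra hr
    have hrI : r ∈ I := Finset.mem_filter.mpr ⟨Finset.mem_Icc.mpr ⟨h1, by omega⟩, hr⟩
    have := Finset.min'_le I r hrI
    omega
  -- pick x in block i0
  obtain ⟨x, hx⟩ := Finset.card_pos.mp (Nat.pos_of_ne_zero hi0ne)
  rw [Lblock, Finset.mem_filter] at hx
  obtain ⟨-, hc1, hc2⟩ := hx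
  set jm : Fin n := ⟨i0 - 1, by omega⟩ with hjm
  set p := σ (Sum.inr (ylist jm)) with hp
  have hpx : p < σ (Sum.inl x) := hc1 jm (by simp [hjm]; omega)
  have hqlt : (p : ℕ) + 1 < Fintype.card (Fin m ⊕ Fin n) := by
    have h1 := (σ (Sum.inl x)).isLt
    rw [Fin.lt_def] at hpx
    omega
  set q : Fin (Fintype.card (Fin m ⊕ Fin n)) := ⟨(p : ℕ) + 1, hqlt⟩ with hqdef
  -- the vertex at position p+1 is an X-vertex x0 in block i0
  cases hw0 : σ.symm q with
  | inr y' =>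
    exfalso
    obtain ⟨k', hk'⟩ := hbij.2 y'
    have hσq : σ (Sum.inr (ylist k')) = q := by
      rw [hk', ← hw0, Equiv.apply_symm_apply]
    rcases le_or_gt k' jm with hle | hlt
    · have := hmono.monotone hle
      rw [hσq, ← hp, Fin.le_def, hqdef] at this
      simp at this
    · have hk'i0 : i0 ≤ (k' : ℕ) := by
        rw [Fin.lt_def] at hlt
        simp [hjm] at hlt
        omega
      have h2 := hc2 k' hk'i0
      rw [hσq] at h2
      rw [Fin.lt_def] at h2 hpx
      simp [hqdef] at h2
      omega
  | inl x0 =>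
    have hq0 : σ (Sum.inl x0) = q := by rw [← hw0, Equiv.apply_symm_apply]
    have hadj : ((σ (Sum.inr (ylist jm))) : ℕ) + 1 = ((σ (Sum.inl x0)) : ℕ) := by
      rw [hq0, ← hp, hqdef]
    -- x0 lies in block i0
    have hx0mem : x0 ∈ Lblock m n σ ylist i0 := by
      rw [Lblock, Finset.mem_filter]
      refine ⟨Finset.mem_univ _, fun j hj => ?_, fun j hj => ?_⟩
      · have hjle : j ≤ jm := by rw [Fin.le_def]; simp [hjm]; omega
        have h1 := hmono.monotone hjle
        rw [← hp] at h1
        rw [Fin.lt_def, hq0, hqdef]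
        rw [Fin.le_def] at h1
        simp
        omega
      · have h2 := hc2 j hj
        rw [Fin.lt_def] at h2 hpx ⊢
        rw [hq0, hqdef]
        simp
        omega
    have hbx0 : bidx m n σ ylist x0 = i0 :=
      (mem_Lblock_iff m n σ ylist hmono x0 i0 (by omega)).mp hx0mem
    set τ := (Equiv.swap (Sum.inl x0) (Sum.inr (ylist jm))).trans σ with hτ
    set B := (univ.filter fun x' : Fin m => σ (Sum.inl x') < σ (Sum.inr (ylist jm))).card with hB
    -- B equals the sum of the first i0 blocks, which equals S
    have hBset : (univ.filter fun x' : Fin m => σ (Sum.inl x') < σ (Sum.inr (ylist jm)))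
        = univ.filter (fun x' => bidx m n σ ylist x' < i0) := by
      apply Finset.filter_congr
      intro x' _
      constructor
      · intro h
        have hnot : ¬ σ (Sum.inr (ylist jm)) < σ (Sum.inl x') := asymm h
        rw [mem_bidx_iff m n σ ylist hmono x' jm] at hnot
        simp [hjm] at hnot
        omega
      · intro h
        have hnot : ¬ ((jm : ℕ) < bidx m n σ ylist x') := by simp [hjm]; omega
        rw [← mem_bidx_iff m n σ ylist hmono x' jm] at hnot
        have hne : σ (Sum.inl x') ≠ σ (Sum.inr (ylist jm)) :=
          fun hh => Sum.inl_ne_inr (σ.injective hh)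
        exact lt_of_le_of_ne (not_lt.mp hnot) hne
    have hBsum : B = ∑ r ∈ Finset.range i0, (Lblock m n σ ylist r).card := by
      rw [hB, hBset]
      rw [Finset.card_eq_sum_card_fiberwise
        (f := bidx m n σ ylist) (t := Finset.range i0)
        (fun x' hx' => Finset.mem_range.mpr (Finset.mem_filter.mp hx').2)]
      apply Finset.sum_congr rfl
      intro r hr
      rw [Finset.mem_range] at hr
      rw [Lblock_eq_fiber m n σ ylist hmono r (by omega)]
      congr 1
      ext x'
      simp only [Finset.mem_filter, Finset.filter_filter, Finset.mem_univ, true_and]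
      constructor
      · rintro ⟨-, h⟩; exact h
      · intro h; exact ⟨by omega, h⟩
    have hBS : B = S := by
      rw [hBsum, hSdef, Finset.range_eq_Ico,
        ← Finset.sum_Ico_consecutive _ (Nat.zero_le (c + 1)) (by omega : c + 1 ≤ i0),
        ← Finset.range_eq_Ico]
      have hzero : ∑ r ∈ Finset.Ico (c + 1) i0, (Lblock m n σ ylist r).card = 0 := by
        apply Finset.sum_eq_zero
        intro r hr
        rw [Finset.mem_Ico] at hr
        exact hmin r hr.1 hr.2
      omega
    -- imbalance of x0 under σ
    have hreA : (univ.filter fun j : Fin n => σ (Sum.inr j) < σ (Sum.inl x0)).card = i0 := by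
      rw [← reindex_card n ylist hbij (fun j => σ (Sum.inr j) < σ (Sum.inl x0))]
      exact hbx0
    have hvi_u_σ : vertexImbalance (completeBipartiteGraph (Fin m) (Fin n)) σ (Sum.inl x0)
        = (2 * (i0 : ℤ) - n).natAbs := by
      rw [vI_inl, hreA]
    -- imbalance of x0 under τ
    have hreA' : (univ.filter fun j : Fin n => τ (Sum.inr j) < τ (Sum.inl x0)).card = i0 - 1 := by
      rw [hτ, swap_count_u m n σ x0 (ylist jm) hadj,
        ← reindex_card n ylist hbij (fun j => σ (Sum.inr j) < σ (Sum.inr (ylist jm)))]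
      have hiff : ∀ j : Fin n, (σ (Sum.inr (ylist j)) < σ (Sum.inr (ylist jm))) ↔ (j : ℕ) < i0 - 1 := by
        intro j
        rw [hmono.lt_iff_lt, Fin.lt_def]
      rw [Finset.filter_congr (fun j _ => hiff j)]
      exact card_filter_lt_fin n (i0 - 1) (by omega)
    have hvi_u_τ : vertexImbalance (completeBipartiteGraph (Fin m) (Fin n)) τ (Sum.inl x0)
        = (2 * ((i0 : ℤ) - 1) - n).natAbs := by
      rw [vI_inl, hreA']
      congr 1
      have : ((i0 - 1 : ℕ) : ℤ) = (i0 : ℤ) - 1 := by omega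
      rw [this]
    -- imbalance of y_{i0-1} under σ and τ
    have hvi_v_σ : vertexImbalance (completeBipartiteGraph (Fin m) (Fin n)) σ (Sum.inr (ylist jm))
        = (2 * (B : ℤ) - m).natAbs := by
      rw [vI_inr, ← hB]
    have hx0notin : x0 ∉ (univ.filter fun x' : Fin m => σ (Sum.inl x') < σ (Sum.inr (ylist jm))) := by
      simp only [Finset.mem_filter, Finset.mem_univ, true_and]
      intro h
      rw [Fin.lt_def] at h
      omega
    have hreB' : (univ.filter fun x' : Fin m => τ (Sum.inl x') < τ (Sum.inr (ylist jm))).card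
        = B + 1 := by
      rw [hτ, swap_count_v m n σ x0 (ylist jm) hadj,
        Finset.card_insert_of_notMem hx0notin, ← hB]
    have hvi_v_τ : vertexImbalance (completeBipartiteGraph (Fin m) (Fin n)) τ (Sum.inr (ylist jm))
        = (2 * ((B : ℤ) + 1) - m).natAbs := by
      rw [vI_inr, hreB']
      congr 1
    -- assemble the total imbalance comparison
    have huv : (Sum.inl x0 : Fin m ⊕ Fin n) ≠ Sum.inr (ylist jm) := by simp
    have hsplit : ∀ ρ : (Fin m ⊕ Fin n) ≃ Fin (Fintype.card (Fin m ⊕ Fin n)),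
        totalImbalance (completeBipartiteGraph (Fin m) (Fin n)) ρ
          = vertexImbalance (completeBipartiteGraph (Fin m) (Fin n)) ρ (Sum.inl x0)
            + (vertexImbalance (completeBipartiteGraph (Fin m) (Fin n)) ρ (Sum.inr (ylist jm))
              + ∑ w ∈ (univ.erase (Sum.inl x0)).erase (Sum.inr (ylist jm)),
                  vertexImbalance (completeBipartiteGraph (Fin m) (Fin n)) ρ w) := by
      intro ρ
      rw [totalImbalance,
        ← Finset.add_sum_erase _ _ (Finset.mem_univ (Sum.inl x0 : Fin m ⊕ Fin n))]
      congr 1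
      rw [← Finset.add_sum_erase _ _
        (Finset.mem_erase.mpr ⟨huv.symm, Finset.mem_univ _⟩)]
    have hrest : ∑ w ∈ (univ.erase (Sum.inl x0)).erase (Sum.inr (ylist jm)),
          vertexImbalance (completeBipartiteGraph (Fin m) (Fin n)) τ w
        = ∑ w ∈ (univ.erase (Sum.inl x0)).erase (Sum.inr (ylist jm)),
          vertexImbalance (completeBipartiteGraph (Fin m) (Fin n)) σ w := by
      apply Finset.sum_congr rfl
      intro w hw
      rw [Finset.mem_erase] at hw
      obtain ⟨hw2, hw1⟩ := hw
      rw [Finset.mem_erase] at hw1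
      exact vI_swap_other m n σ x0 (ylist jm) hadj w hw1.1 hw2
    have hle := hopt τ
    rw [hsplit σ, hsplit τ, hrest, hvi_u_σ, hvi_u_τ, hvi_v_σ, hvi_v_τ] at hle
    have hi02 : (n : ℤ) + 2 ≤ 2 * (i0 : ℤ) := by omega
    have hBm : 2 * (B : ℤ) < m := by
      have : B = S := hBS
      omega
    omega
end

section
/- (Median vertex property.) Let m and n both be odd and let σ be an imbalance-optimal ordering of K_{m,n}. Then the vertex y_m ∈ Y occupying the ⌈n/2⌉-th position among Y-vertices in σ has imbalance exactly 1 under σ. -/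
open Finset
open scoped Classical

def rotFun (q p i : ℕ) : ℕ := if i = p then q else if q ≤ i ∧ i < p then i + 1 else i

def rotEquiv {N : ℕ} (q p : Fin N) (h : q < p) : Fin N ≃ Fin N where
  toFun i := ⟨rotFun q p i, by unfold rotFun; split_ifs <;> omega⟩
  invFun i := ⟨if (i : ℕ) = q then p else if (q : ℕ) < i ∧ (i : ℕ) ≤ p then i - 1 else i, by
    split_ifs <;> omega⟩
  left_inv i := by ext; simp only [rotFun]; split_ifs <;> omega
  right_inv i := by ext; simp only [rotFun]; split_ifs <;> omega

lemma rot_lt_ne (q p i i' : ℕ) (hq : q < p) (hi : i ≠ p) (hi' : i' ≠ p) :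
    rotFun q p i < rotFun q p i' ↔ i < i' := by unfold rotFun; split_ifs <;> omega

lemma rot_lt_out (q p i i' : ℕ) (hq : q < p) (h : i' < q ∨ p < i') :
    (rotFun q p i < rotFun q p i' ↔ i < i') ∧ (rotFun q p i' < rotFun q p i ↔ i' < i) := by
  unfold rotFun; split_ifs <;> omega

lemma rot_p (q p : ℕ) (h : q < p) : rotFun q p p = q := by simp [rotFun]
lemma rot_q (q p : ℕ) (h : q < p) : rotFun q p q = q + 1 := by
  unfold rotFun; split_ifs <;> omega

lemma filter_adj_inr {m n : ℕ} (y0 : Fin n) (P : (Fin m ⊕ Fin n) → Prop) [DecidablePred P] :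
    (univ.filter fun u => (completeBipartiteGraph (Fin m) (Fin n)).Adj (Sum.inr y0) u ∧ P u).card
      = (univ.filter fun k : Fin m => P (Sum.inl k)).card := by
  symm
  apply Finset.card_bij (fun k _ => Sum.inl k)
  · intro k hk
    simp only [mem_filter, mem_univ, true_and] at hk ⊢
    exact ⟨by simp [completeBipartiteGraph_adj], hk⟩
  · intro a _ b _ h; simpa using h
  · rintro (k | z) hb
    · refine ⟨k, ?_, rfl⟩
      simp only [mem_filter, mem_univ, true_and] at hb ⊢
      exact hb.2
    · simp only [mem_filter, completeBipartiteGraph_adj] at hb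
      simp at hb

lemma filter_adj_inl {m n : ℕ} (k0 : Fin m) (P : (Fin m ⊕ Fin n) → Prop) [DecidablePred P] :
    (univ.filter fun u => (completeBipartiteGraph (Fin m) (Fin n)).Adj (Sum.inl k0) u ∧ P u).card
      = (univ.filter fun z : Fin n => P (Sum.inr z)).card := by
  symm
  apply Finset.card_bij (fun z _ => Sum.inr z)
  · intro z hz
    simp only [mem_filter, mem_univ, true_and] at hz ⊢
    exact ⟨by simp [completeBipartiteGraph_adj], hz⟩
  · intro a _ b _ h; simpa using h
  · rintro (k | z) hb
    · simp only [mem_filter, completeBipartiteGraph_adj] at hb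
      simp at hb
    · refine ⟨z, ?_, rfl⟩
      simp only [mem_filter, mem_univ, true_and] at hb ⊢
      exact hb.2

lemma count_split {k : ℕ} (P Q : Fin k → Prop) [DecidablePred P] [DecidablePred Q] (h : ∀ z, P z ↔ ¬ Q z) :
    (univ.filter P).card + (univ.filter Q).card = k := by
  classical
  have : (univ.filter P) = (univ.filter fun z => ¬ Q z) := by
    apply filter_congr; intro z _; exact h z
  rw [this, add_comm, Finset.card_filter_add_card_filter_not]
  simp

lemma core {m n : ℕ} (σ : (Fin m ⊕ Fin n) ≃ Fin (Fintype.card (Fin m ⊕ Fin n)))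
    (hopt : ∀ τ, totalImbalance (completeBipartiteGraph (Fin m) (Fin n)) σ ≤
      totalImbalance (completeBipartiteGraph (Fin m) (Fin n)) τ)
    (y0 : Fin n)
    (hY : ∀ k : Fin m, σ (Sum.inl k) < σ (Sum.inr y0) →
      2 * (univ.filter fun z : Fin n => σ (Sum.inr z) < σ (Sum.inl k)).card < n)
    (hd : (univ.filter fun k : Fin m => σ (Sum.inr y0) < σ (Sum.inl k)).card + 2 ≤
      (univ.filter fun k : Fin m => σ (Sum.inl k) < σ (Sum.inr y0)).card) : False := by
  set G := completeBipartiteGraph (Fin m) (Fin n) with hG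
  set p := σ (Sum.inr y0) with hp
  have hS : (univ.filter fun k : Fin m => σ (Sum.inl k) < p).Nonempty := by
    rw [← Finset.card_pos]; omega
  obtain ⟨k0, hk0S, hmax⟩ := Finset.exists_max_image _ (fun k => σ (Sum.inl k)) hS
  set q := σ (Sum.inl k0) with hq
  have hqp : q < p := (mem_filter.mp hk0S).2
  set π := rotEquiv q p hqp with hπ
  set τ := σ.trans π with hτ
  -- basic injectivity facts
  have hinj : ∀ u v : Fin m ⊕ Fin n, σ u = σ v → u = v := fun u v h => σ.injective h
  have hnep : ∀ k : Fin m, ((σ (Sum.inl k) : ℕ)) ≠ (p : ℕ) := by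
    intro k h
    exact absurd (hinj _ _ (Fin.val_injective h)) (by simp)
  have hnezp : ∀ z : Fin n, z ≠ y0 → ((σ (Sum.inr z) : ℕ)) ≠ (p : ℕ) := by
    intro z hz h
    exact hz (by simpa using hinj _ _ (Fin.val_injective h))
  have hneq : ∀ z : Fin n, ((σ (Sum.inr z) : ℕ)) ≠ (q : ℕ) := by
    intro z h
    exact absurd (hinj _ _ (Fin.val_injective h)) (by simp)
  have hqnep : (q : ℕ) ≠ (p : ℕ) := Fin.val_ne_of_ne (ne_of_lt hqp)
  -- X vertices other than k0 are outside [q,p]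
  have hout : ∀ k : Fin m, k ≠ k0 → ((σ (Sum.inl k) : ℕ) < q ∨ (p : ℕ) < σ (Sum.inl k)) := by
    intro k hk
    rcases lt_trichotomy (σ (Sum.inl k)) p with h | h | h
    · left
      have hle : σ (Sum.inl k) ≤ q := hmax k (mem_filter.mpr ⟨mem_univ _, h⟩)
      have hne : ((σ (Sum.inl k) : ℕ)) ≠ (q : ℕ) := by
        intro e
        exact hk (by simpa using hinj _ _ (Fin.val_injective e))
      have hle' := Fin.le_def.mp hle
      omega
    · exact absurd (hinj _ _ h) (by simp)
    · right; exact h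
  have hlt : ∀ u v : Fin m ⊕ Fin n,
      (τ u < τ v ↔ rotFun q p (σ u) < rotFun q p (σ v)) := fun u v => Iff.rfl
  -- generic Y vertices unchanged
  have claimY : ∀ z : Fin n, z ≠ y0 →
      vertexImbalance G τ (Sum.inr z) = vertexImbalance G σ (Sum.inr z) := by
    intro z hz
    have hiff : ∀ u : Fin m ⊕ Fin n, G.Adj (Sum.inr z) u →
        ((τ u < τ (Sum.inr z) ↔ σ u < σ (Sum.inr z)) ∧
         (τ (Sum.inr z) < τ u ↔ σ (Sum.inr z) < σ u)) := by
      rintro (k | w) hadj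
      · constructor
        · rw [hlt, Fin.lt_def]
          exact rot_lt_ne _ _ _ _ hqp (hnep k) (hnezp z hz)
        · rw [hlt, Fin.lt_def]
          exact rot_lt_ne _ _ _ _ hqp (hnezp z hz) (hnep k)
      · rw [hG] at hadj; simp [completeBipartiteGraph_adj] at hadj
    unfold vertexImbalance
    rw [filter_congr (fun u _ => and_congr_right fun hadj => (hiff u hadj).1),
        filter_congr (fun u _ => and_congr_right fun hadj => (hiff u hadj).2)]
  -- generic X vertices unchanged
  have claimX : ∀ k : Fin m, k ≠ k0 →
      vertexImbalance G τ (Sum.inl k) = vertexImbalance G σ (Sum.inl k) := by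
    intro k hk
    have hko := hout k hk
    have hiff : ∀ u : Fin m ⊕ Fin n, G.Adj (Sum.inl k) u →
        ((τ u < τ (Sum.inl k) ↔ σ u < σ (Sum.inl k)) ∧
         (τ (Sum.inl k) < τ u ↔ σ (Sum.inl k) < σ u)) := by
      rintro (k' | w) hadj
      · rw [hG] at hadj; simp [completeBipartiteGraph_adj] at hadj
      · constructor
        · rw [hlt, Fin.lt_def]
          exact (rot_lt_out q p (σ (Sum.inr w)) (σ (Sum.inl k)) hqp hko).1
        · rw [hlt, Fin.lt_def]
          exact (rot_lt_out q p (σ (Sum.inr w)) (σ (Sum.inl k)) hqp hko).2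
    unfold vertexImbalance
    rw [filter_congr (fun u _ => and_congr_right fun hadj => (hiff u hadj).1),
        filter_congr (fun u _ => and_congr_right fun hadj => (hiff u hadj).2)]
  -- rotation values at q and p
  have hr1 : rotFun ↑q ↑p ↑(σ (Sum.inl k0)) = (q : ℕ) + 1 := rot_q _ _ hqp
  have hr2 : rotFun ↑q ↑p ↑(σ (Sum.inr y0)) = (q : ℕ) := rot_p _ _ hqp
  -- the vertex y0
  have hk0mem : Sum.inl k0 ∈ (univ.filter fun u => G.Adj (Sum.inr y0) u ∧ σ u < σ (Sum.inr y0)) := by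
    simp only [mem_filter, mem_univ, true_and]
    exact ⟨by simp [hG, completeBipartiteGraph_adj], hqp⟩
  have hk0notmem : Sum.inl k0 ∉ (univ.filter fun u => G.Adj (Sum.inr y0) u ∧ σ (Sum.inr y0) < σ u) := by
    simp only [mem_filter, mem_univ, true_and, not_and]
    intro _ h
    exact absurd h (not_lt.mpr hqp.le)
  have hAy : (univ.filter fun u => G.Adj (Sum.inr y0) u ∧ τ u < τ (Sum.inr y0))
      = (univ.filter fun u => G.Adj (Sum.inr y0) u ∧ σ u < σ (Sum.inr y0)).erase (Sum.inl k0) := by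
    ext u
    simp only [mem_erase, mem_filter, mem_univ, true_and]
    rcases u with k | z
    · by_cases hk : k = k0
      · subst hk
        constructor
        · rintro ⟨_, hlt2⟩
          rw [hlt, hr1, hr2] at hlt2
          omega
        · rintro ⟨hne2, _⟩
          exact absurd rfl hne2
      · have hiff2 := (rot_lt_out (q : ℕ) (p : ℕ) (p : ℕ) (σ (Sum.inl k) : ℕ) hqp (hout k hk)).2
        constructor
        · rintro ⟨hadj, hlt2⟩
          rw [hlt, hr2] at hlt2
          refine ⟨by simpa using hk, hadj, ?_⟩
          rw [Fin.lt_def]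
          exact hiff2.mp (by rw [rot_p _ _ hqp]; exact hlt2)
        · rintro ⟨_, hadj, hlt2⟩
          refine ⟨hadj, ?_⟩
          rw [hlt, hr2]
          have h3 := hiff2.mpr (Fin.lt_def.mp hlt2)
          rw [rot_p _ _ hqp] at h3
          exact h3
    · constructor
      · rintro ⟨hadj, _⟩
        rw [hG] at hadj; simp [completeBipartiteGraph_adj] at hadj
      · rintro ⟨_, hadj, _⟩
        rw [hG] at hadj; simp [completeBipartiteGraph_adj] at hadj
  have hBy : (univ.filter fun u => G.Adj (Sum.inr y0) u ∧ τ (Sum.inr y0) < τ u)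
      = insert (Sum.inl k0) (univ.filter fun u => G.Adj (Sum.inr y0) u ∧ σ (Sum.inr y0) < σ u) := by
    ext u
    simp only [mem_insert, mem_filter, mem_univ, true_and]
    rcases u with k | z
    · by_cases hk : k = k0
      · subst hk
        simp only [true_or, iff_true]
        refine ⟨by simp [hG, completeBipartiteGraph_adj], ?_⟩
        rw [hlt, hr1, hr2]
        omega
      · have hiff2 := (rot_lt_out (q : ℕ) (p : ℕ) (p : ℕ) (σ (Sum.inl k) : ℕ) hqp (hout k hk)).1
        have hkne : (Sum.inl k : Fin m ⊕ Fin n) ≠ Sum.inl k0 := by simpa using hk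
        constructor
        · rintro ⟨hadj, hlt2⟩
          rw [hlt, hr2] at hlt2
          right
          refine ⟨hadj, ?_⟩
          rw [Fin.lt_def]
          exact hiff2.mp (by rw [rot_p _ _ hqp]; exact hlt2)
        · rintro (he | ⟨hadj, hlt2⟩)
          · exact absurd he hkne
          · refine ⟨hadj, ?_⟩
            rw [hlt, hr2]
            have h3 := hiff2.mpr (Fin.lt_def.mp hlt2)
            rw [rot_p _ _ hqp] at h3
            exact h3
    · constructor
      · rintro ⟨hadj, _⟩
        rw [hG] at hadj; simp [completeBipartiteGraph_adj] at hadj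
      · rintro (he | ⟨hadj, _⟩)
        · simp at he
        · rw [hG] at hadj; simp [completeBipartiteGraph_adj] at hadj
  -- counts at y0 in terms of Fin m
  have haS : (univ.filter fun u => G.Adj (Sum.inr y0) u ∧ σ u < σ (Sum.inr y0)).card
      = (univ.filter fun k : Fin m => σ (Sum.inl k) < σ (Sum.inr y0)).card := by
    rw [hG]; exact filter_adj_inr y0 (fun u => σ u < σ (Sum.inr y0))
  have hbS : (univ.filter fun u => G.Adj (Sum.inr y0) u ∧ σ (Sum.inr y0) < σ u).card
      = (univ.filter fun k : Fin m => σ (Sum.inr y0) < σ (Sum.inl k)).card := by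
    rw [hG]; exact filter_adj_inr y0 (fun u => σ (Sum.inr y0) < σ u)
  have claimy : vertexImbalance G τ (Sum.inr y0) < vertexImbalance G σ (Sum.inr y0) := by
    unfold vertexImbalance
    rw [hAy, hBy, card_erase_of_mem hk0mem, card_insert_of_notMem hk0notmem]
    have h1 : 1 ≤ (univ.filter fun u => G.Adj (Sum.inr y0) u ∧ σ u < σ (Sum.inr y0)).card :=
      card_pos.mpr ⟨_, hk0mem⟩
    have hd' := hd
    rw [hp] at hd'
    omega
  -- the vertex k0
  have hymem : Sum.inr y0 ∈ (univ.filter fun u => G.Adj (Sum.inl k0) u ∧ σ (Sum.inl k0) < σ u) := by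
    simp only [mem_filter, mem_univ, true_and]
    exact ⟨by simp [hG, completeBipartiteGraph_adj], hqp⟩
  have hynotmem : Sum.inr y0 ∉ (univ.filter fun u => G.Adj (Sum.inl k0) u ∧ σ u < σ (Sum.inl k0)) := by
    simp only [mem_filter, mem_univ, true_and, not_and]
    intro _ h
    exact absurd h (not_lt.mpr hqp.le)
  have hAx : (univ.filter fun u => G.Adj (Sum.inl k0) u ∧ τ u < τ (Sum.inl k0))
      = insert (Sum.inr y0) (univ.filter fun u => G.Adj (Sum.inl k0) u ∧ σ u < σ (Sum.inl k0)) := by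
    ext u
    simp only [mem_insert, mem_filter, mem_univ, true_and]
    rcases u with k | z
    · constructor
      · rintro ⟨hadj, _⟩
        rw [hG] at hadj; simp [completeBipartiteGraph_adj] at hadj
      · rintro (he | ⟨hadj, _⟩)
        · simp at he
        · rw [hG] at hadj; simp [completeBipartiteGraph_adj] at hadj
    · by_cases hz : z = y0
      · subst hz
        simp only [true_or, iff_true]
        refine ⟨by simp [hG, completeBipartiteGraph_adj], ?_⟩
        rw [hlt, hr1, hr2]
        omega
      · have hiff2 := rot_lt_ne (q : ℕ) (p : ℕ) (σ (Sum.inr z) : ℕ) (q : ℕ) hqp (hnezp z hz) hqnep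
        have hzne : (Sum.inr z : Fin m ⊕ Fin n) ≠ Sum.inr y0 := by simpa using hz
        constructor
        · rintro ⟨hadj, hlt2⟩
          rw [hlt, hr1] at hlt2
          right
          refine ⟨hadj, ?_⟩
          rw [Fin.lt_def]
          exact hiff2.mp (by rw [rot_q _ _ hqp]; omega)
        · rintro (he | ⟨hadj, hlt2⟩)
          · exact absurd he hzne
          · refine ⟨hadj, ?_⟩
            rw [hlt, hr1]
            have h3 := hiff2.mpr (Fin.lt_def.mp hlt2)
            rw [rot_q _ _ hqp] at h3
            exact h3
  have hBx : (univ.filter fun u => G.Adj (Sum.inl k0) u ∧ τ (Sum.inl k0) < τ u)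
      = (univ.filter fun u => G.Adj (Sum.inl k0) u ∧ σ (Sum.inl k0) < σ u).erase (Sum.inr y0) := by
    ext u
    simp only [mem_erase, mem_filter, mem_univ, true_and]
    rcases u with k | z
    · constructor
      · rintro ⟨hadj, _⟩
        rw [hG] at hadj; simp [completeBipartiteGraph_adj] at hadj
      · rintro ⟨_, hadj, _⟩
        rw [hG] at hadj; simp [completeBipartiteGraph_adj] at hadj
    · by_cases hz : z = y0
      · subst hz
        constructor
        · rintro ⟨_, hlt2⟩
          rw [hlt, hr1, hr2] at hlt2
          omega
        · rintro ⟨hne2, _⟩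
          exact absurd rfl hne2
      · have hiff2 := rot_lt_ne (q : ℕ) (p : ℕ) (q : ℕ) (σ (Sum.inr z) : ℕ) hqp hqnep (hnezp z hz)
        have hzne : (Sum.inr z : Fin m ⊕ Fin n) ≠ Sum.inr y0 := by simpa using hz
        constructor
        · rintro ⟨hadj, hlt2⟩
          rw [hlt, hr1] at hlt2
          refine ⟨hzne, hadj, ?_⟩
          rw [Fin.lt_def]
          exact hiff2.mp (by rw [rot_q _ _ hqp]; omega)
        · rintro ⟨_, hadj, hlt2⟩
          refine ⟨hadj, ?_⟩
          rw [hlt, hr1]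
          have h3 := hiff2.mpr (Fin.lt_def.mp hlt2)
          rw [rot_q _ _ hqp] at h3
          exact h3
  -- counts at k0 in terms of Fin n
  have haxS : (univ.filter fun u => G.Adj (Sum.inl k0) u ∧ σ u < σ (Sum.inl k0)).card
      = (univ.filter fun z : Fin n => σ (Sum.inr z) < σ (Sum.inl k0)).card := by
    rw [hG]; exact filter_adj_inl k0 (fun u => σ u < σ (Sum.inl k0))
  have hbxS : (univ.filter fun u => G.Adj (Sum.inl k0) u ∧ σ (Sum.inl k0) < σ u).card
      = (univ.filter fun z : Fin n => σ (Sum.inl k0) < σ (Sum.inr z)).card := by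
    rw [hG]; exact filter_adj_inl k0 (fun u => σ (Sum.inl k0) < σ u)
  have hsplitn : (univ.filter fun z : Fin n => σ (Sum.inr z) < σ (Sum.inl k0)).card
      + (univ.filter fun z : Fin n => σ (Sum.inl k0) < σ (Sum.inr z)).card = n := by
    apply count_split
    intro z
    have := hneq z
    rw [Fin.lt_def, Fin.lt_def, not_lt]
    omega
  have h2a := hY k0 hqp
  have claimx : vertexImbalance G τ (Sum.inl k0) ≤ vertexImbalance G σ (Sum.inl k0) := by
    unfold vertexImbalance
    rw [hAx, hBx, card_insert_of_notMem hynotmem, card_erase_of_mem hymem]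
    have h1 : 1 ≤ (univ.filter fun u => G.Adj (Sum.inl k0) u ∧ σ (Sum.inl k0) < σ u).card :=
      card_pos.mpr ⟨_, hymem⟩
    omega
  -- total imbalance strictly decreases
  have htot : totalImbalance G τ < totalImbalance G σ := by
    unfold totalImbalance
    apply Finset.sum_lt_sum
    · rintro (k | z) _
      · by_cases hk : k = k0
        · subst hk; exact claimx
        · exact le_of_eq (claimX k hk)
      · by_cases hz : z = y0
        · subst hz; exact le_of_lt claimy
        · exact le_of_eq (claimY z hz)
    · exact ⟨Sum.inr y0, mem_univ _, claimy⟩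
  exact absurd (hopt τ) (not_le.mpr htot)

lemma vertexImbalance_rev {V : Type*} [Fintype V] (G : SimpleGraph V)
    (σ : V ≃ Fin (Fintype.card V)) (v : V) :
    vertexImbalance G (σ.trans Fin.revPerm) v = vertexImbalance G σ v := by
  unfold vertexImbalance
  have h1 : (univ.filter fun u => G.Adj v u ∧ (σ.trans Fin.revPerm) u < (σ.trans Fin.revPerm) v)
      = (univ.filter fun u => G.Adj v u ∧ σ v < σ u) :=
    filter_congr fun u _ => and_congr_right fun _ => by
      simp [Equiv.trans_apply, Fin.revPerm_apply, Fin.rev_lt_rev]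
  have h2 : (univ.filter fun u => G.Adj v u ∧ (σ.trans Fin.revPerm) v < (σ.trans Fin.revPerm) u)
      = (univ.filter fun u => G.Adj v u ∧ σ u < σ v) :=
    filter_congr fun u _ => and_congr_right fun _ => by
      simp [Equiv.trans_apply, Fin.revPerm_apply, Fin.rev_lt_rev]
  rw [h1, h2]
  omega

lemma totalImbalance_rev {V : Type*} [Fintype V] (G : SimpleGraph V)
    (σ : V ≃ Fin (Fintype.card V)) :
    totalImbalance G (σ.trans Fin.revPerm) = totalImbalance G σ := by
  unfold totalImbalance
  exact Finset.sum_congr rfl fun v _ => vertexImbalance_rev G σ v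

theorem stmt12 (m n : ℕ) (hm : Odd m) (hn : Odd n)
    (σ : (Fin m ⊕ Fin n) ≃ Fin (Fintype.card (Fin m ⊕ Fin n)))
    (hopt : ∀ τ : (Fin m ⊕ Fin n) ≃ Fin (Fintype.card (Fin m ⊕ Fin n)),
      totalImbalance (completeBipartiteGraph (Fin m) (Fin n)) σ ≤ totalImbalance (completeBipartiteGraph (Fin m) (Fin n)) τ)
    (ylist : Fin n → Fin n) (hbij : Function.Bijective ylist)
    (hmono : StrictMono fun i : Fin n => σ (Sum.inr (ylist i)))
    (j : Fin n) (hj : (j : ℕ) + 1 = (n + 1) / 2) :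
    vertexImbalance (completeBipartiteGraph (Fin m) (Fin n)) σ (Sum.inr (ylist j)) = 1 := by
  obtain ⟨r, hr⟩ := hn
  have hjr : (j : ℕ) = r := by omega
  set y0 := ylist j with hy0
  -- number of Y vertices before y0 is j
  have hcount : (univ.filter fun z : Fin n => σ (Sum.inr z) < σ (Sum.inr y0)).card = (j : ℕ) := by
    have h0 : (univ.filter fun i : Fin n => i < j).card = (j : ℕ) := by
      rw [show (univ.filter fun i : Fin n => i < j) = Finset.Iio j by ext i; simp, Fin.card_Iio]
    rw [← h0]
    symm
    apply Finset.card_bij (fun i _ => ylist i)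
    · intro i hi
      simp only [mem_filter, mem_univ, true_and] at hi ⊢
      exact hmono hi
    · intro i _ i' _ h
      exact hbij.1 h
    · intro z hz
      simp only [mem_filter, mem_univ, true_and] at hz
      obtain ⟨i, rfl⟩ := hbij.2 z
      exact ⟨i, by simp only [mem_filter, mem_univ, true_and]; exact hmono.lt_iff_lt.mp hz, rfl⟩
  -- number of Y vertices after y0 is j
  have hcount2 : (univ.filter fun z : Fin n => σ (Sum.inr y0) < σ (Sum.inr z)).card = (j : ℕ) := by
    have e2 := count_split (fun z : Fin n => σ (Sum.inr z) < σ (Sum.inr y0) ∨ z = y0)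
      (fun z => σ (Sum.inr y0) < σ (Sum.inr z)) (fun z => by
        rcases lt_trichotomy (σ (Sum.inr z)) (σ (Sum.inr y0)) with h | h | h
        · simp [h, not_lt.mpr h.le]
        · have hz : z = y0 := by simpa using σ.injective h
          simp [hz]
        · constructor
          · rintro (h2 | h2)
            · exact absurd h (not_lt.mpr h2.le)
            · subst h2; exact absurd h (lt_irrefl _)
          · intro h2; exact absurd h h2)
    have e1 : (univ.filter fun z : Fin n => σ (Sum.inr z) < σ (Sum.inr y0) ∨ z = y0)
        = insert y0 (univ.filter fun z : Fin n => σ (Sum.inr z) < σ (Sum.inr y0)) := by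
      ext z
      simp only [mem_insert, mem_filter, mem_univ, true_and]
      tauto
    have hy0not : y0 ∉ (univ.filter fun z : Fin n => σ (Sum.inr z) < σ (Sum.inr y0)) := by
      simp
    rw [e1, card_insert_of_notMem hy0not, hcount] at e2
    omega
  -- the imbalance of y0 in terms of Fin m counts
  have hva : vertexImbalance (completeBipartiteGraph (Fin m) (Fin n)) σ (Sum.inr y0)
      = (((univ.filter fun k : Fin m => σ (Sum.inl k) < σ (Sum.inr y0)).card : ℤ)
        - ((univ.filter fun k : Fin m => σ (Sum.inr y0) < σ (Sum.inl k)).card : ℤ)).natAbs := by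
    unfold vertexImbalance
    have e1 : (univ.filter fun u => (completeBipartiteGraph (Fin m) (Fin n)).Adj (Sum.inr y0) u ∧ σ u < σ (Sum.inr y0)).card
        = (univ.filter fun k : Fin m => σ (Sum.inl k) < σ (Sum.inr y0)).card :=
      filter_adj_inr y0 (fun u => σ u < σ (Sum.inr y0))
    have e2 : (univ.filter fun u => (completeBipartiteGraph (Fin m) (Fin n)).Adj (Sum.inr y0) u ∧ σ (Sum.inr y0) < σ u).card
        = (univ.filter fun k : Fin m => σ (Sum.inr y0) < σ (Sum.inl k)).card :=
      filter_adj_inr y0 (fun u => σ (Sum.inr y0) < σ u)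
    rw [e1, e2]
  have hab : (univ.filter fun k : Fin m => σ (Sum.inl k) < σ (Sum.inr y0)).card
      + (univ.filter fun k : Fin m => σ (Sum.inr y0) < σ (Sum.inl k)).card = m := by
    apply count_split
    intro k
    rcases lt_trichotomy (σ (Sum.inl k)) (σ (Sum.inr y0)) with h | h | h
    · simp [h, not_lt.mpr h.le]
    · exact absurd (σ.injective h) (by simp)
    · constructor
      · intro h2; exact absurd h (not_lt.mpr h2.le)
      · intro h2; exact absurd h h2
  obtain ⟨s, hs⟩ := hm
  by_contra hne1
  rw [hva] at hne1
  have h2le : ((univ.filter fun k : Fin m => σ (Sum.inr y0) < σ (Sum.inl k)).card : ℕ) + 2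
        ≤ (univ.filter fun k : Fin m => σ (Sum.inl k) < σ (Sum.inr y0)).card
      ∨ ((univ.filter fun k : Fin m => σ (Sum.inl k) < σ (Sum.inr y0)).card : ℕ) + 2
        ≤ (univ.filter fun k : Fin m => σ (Sum.inr y0) < σ (Sum.inl k)).card := by
    omega
  rcases h2le with hcase | hcase
  · -- more X before y0 : rotate y0 to the left
    apply core σ hopt y0 ?_ hcase
    intro k hk
    have hsub : (univ.filter fun z : Fin n => σ (Sum.inr z) < σ (Sum.inl k))
        ⊆ (univ.filter fun z : Fin n => σ (Sum.inr z) < σ (Sum.inr y0)) := by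
      intro z hz
      simp only [mem_filter, mem_univ, true_and] at hz ⊢
      exact lt_trans hz hk
    have hle := card_le_card hsub
    rw [hcount] at hle
    omega
  · -- more X after y0 : work with the reversed ordering
    set σ' := σ.trans Fin.revPerm with hσ'
    have hrev : ∀ u v : Fin m ⊕ Fin n, (σ' u < σ' v ↔ σ v < σ u) := fun u v => by
      simp [hσ', Equiv.trans_apply, Fin.revPerm_apply, Fin.rev_lt_rev]
    have hopt' : ∀ τ : (Fin m ⊕ Fin n) ≃ Fin (Fintype.card (Fin m ⊕ Fin n)),
        totalImbalance (completeBipartiteGraph (Fin m) (Fin n)) σ' ≤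
        totalImbalance (completeBipartiteGraph (Fin m) (Fin n)) τ := by
      intro τ
      rw [hσ', totalImbalance_rev]
      exact hopt τ
    apply core σ' hopt' y0 ?_ ?_
    · intro k hk
      rw [hrev] at hk
      have e3 : (univ.filter fun z : Fin n => σ' (Sum.inr z) < σ' (Sum.inl k))
          = (univ.filter fun z : Fin n => σ (Sum.inl k) < σ (Sum.inr z)) :=
        filter_congr fun z _ => by rw [hrev]
      rw [e3]
      have hsub : (univ.filter fun z : Fin n => σ (Sum.inl k) < σ (Sum.inr z))
          ⊆ (univ.filter fun z : Fin n => σ (Sum.inr y0) < σ (Sum.inr z)) := by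
        intro z hz
        simp only [mem_filter, mem_univ, true_and] at hz ⊢
        exact lt_trans hk hz
      have hle := card_le_card hsub
      rw [hcount2] at hle
      omega
    · have e4 : (univ.filter fun k : Fin m => σ' (Sum.inr y0) < σ' (Sum.inl k))
          = (univ.filter fun k : Fin m => σ (Sum.inl k) < σ (Sum.inr y0)) :=
        filter_congr fun k _ => by rw [hrev]
      have e5 : (univ.filter fun k : Fin m => σ' (Sum.inl k) < σ' (Sum.inr y0))
          = (univ.filter fun k : Fin m => σ (Sum.inr y0) < σ (Sum.inl k)) :=
        filter_congr fun k _ => by rw [hrev]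
      rw [e4, e5]
      exact hcase
end
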